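/- arXiv:2103.11884 — 7 statements merged into one kernel-verified Lean document; each statement's English description precedes it below -/
import Mathlib

section
/- Let X be a measurable space and Φ : Ω → Measure(X) a point process, i.e. a measurable map into finite measures on X, whose intensity measure Λ, defined by Λ(B) = E[Φ(B)] for Borel sets B, is finite with 0 < Λ(X) < ∞. Let ℱ be a class of probability measures on X containing the normalized intensity Λ* = Λ / Λ(X), and let S' : ℱ × X → ℝ be a measurable strictly consistent scoring function for the identity on ℱ (i.e. ∫ S'(Q, x) dP(x) ≥ ∫ S'(P, x) dP(x) for all P, Q ∈ ℱ, with equality iff Q = P), such that S'(Q, ·) is Λ-integrable for all Q ∈ ℱ. Define the scoring function S(Q, φ) = ∫_X S'(Q, x) dφ(x) for finite counting measures φ (with S(Q, ∅) = 0). Then by Campbell's theorem, for every Q ∈ ℱ, E[S(Q, Φ)] ≥ E[S(Λ*, Φ)], with equality if and only if Q = Λ*; i.e. S is a strictly consistent scoring function for the normalized intensity measure. -/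
/-!
By Campbell's theorem the expected score `E[S(Q, Φ)]` equals `∫ S'(Q, ·) dΛ = Λ(X) ∫ S'(Q, ·) dΛ*`.
Since `Λ(X) > 0`, comparing expected scores of `S` is comparing expected scores of `S'` under
`P = Λ*`, and strict consistency of `S'` at `Λ*` gives the claim.
-/

open MeasureTheory ENNReal

namespace MeasureTheory.Measure

variable {α β : Type*} [MeasurableSpace α] [MeasurableSpace β] {m : Measure α}
  {κ : α → Measure β}

lemma ae_integrable_of_integrable_bind {E : Type*} [NormedAddCommGroup E] (hκ : Measurable κ)
    {f : β → E} (hf : StronglyMeasurable f) (hint : Integrable f (m.bind κ)) :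
    ∀ᵐ a ∂m, Integrable f (κ a) := by
  have hfin : ∫⁻ a, ∫⁻ x, ‖f x‖ₑ ∂κ a ∂m ≠ ∞ := by
    rw [← lintegral_bind hκ.aemeasurable hf.enorm.aemeasurable]
    exact hint.2.ne
  filter_upwards [ae_lt_top ((measurable_lintegral hf.enorm).comp hκ) hfin] with a ha
  exact ⟨hf.aestronglyMeasurable, ha⟩

lemma integrable_toReal_lintegral_of_lintegral_bind_ne_top (hκ : Measurable κ)
    {g : β → ℝ≥0∞} (hg : Measurable g) (hfin : ∫⁻ x, g x ∂m.bind κ ≠ ∞) :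
    Integrable (fun a ↦ (∫⁻ x, g x ∂κ a).toReal) m := by
  rw [lintegral_bind hκ.aemeasurable hg.aemeasurable] at hfin
  exact integrable_toReal_of_lintegral_ne_top ((measurable_lintegral hg).comp hκ).aemeasurable hfin

lemma integral_toReal_lintegral_of_lintegral_bind_ne_top (hκ : Measurable κ)
    {g : β → ℝ≥0∞} (hg : Measurable g) (hfin : ∫⁻ x, g x ∂m.bind κ ≠ ∞) :
    ∫ a, (∫⁻ x, g x ∂κ a).toReal ∂m = (∫⁻ x, g x ∂m.bind κ).toReal := by
  rw [lintegral_bind hκ.aemeasurable hg.aemeasurable] at hfin ⊢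
  have hmeas : Measurable fun a ↦ ∫⁻ x, g x ∂κ a := (measurable_lintegral hg).comp hκ
  exact integral_toReal hmeas.aemeasurable (ae_lt_top hmeas hfin)

/-- Campbell's theorem. Unlike `ProbabilityTheory.Kernel.integral_comp`, it needs no
s-finiteness of the measures `κ a`. -/
theorem integral_bind (hκ : Measurable κ) {f : β → ℝ} (hf : Measurable f)
    (hint : Integrable f (m.bind κ)) :
    ∫ x, f x ∂m.bind κ = ∫ a, ∫ x, f x ∂κ a ∂m := by
  have hpos := hint.lintegral_lt_top.ne
  have hneg := hint.neg.lintegral_lt_top.ne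
  simp only [Pi.neg_apply] at hneg
  have hfpos : Measurable fun x ↦ ENNReal.ofReal (f x) := hf.ennreal_ofReal
  have hfneg : Measurable fun x ↦ ENNReal.ofReal (-f x) := hf.neg.ennreal_ofReal
  calc ∫ x, f x ∂m.bind κ
      = (∫⁻ x, .ofReal (f x) ∂m.bind κ).toReal - (∫⁻ x, .ofReal (-f x) ∂m.bind κ).toReal :=
        integral_eq_lintegral_pos_part_sub_lintegral_neg_part hint
    _ = ∫ a, ((∫⁻ x, .ofReal (f x) ∂κ a).toReal - (∫⁻ x, .ofReal (-f x) ∂κ a).toReal) ∂m := by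
        rw [integral_sub
          (integrable_toReal_lintegral_of_lintegral_bind_ne_top hκ hfpos hpos)
          (integrable_toReal_lintegral_of_lintegral_bind_ne_top hκ hfneg hneg),
          integral_toReal_lintegral_of_lintegral_bind_ne_top hκ hfpos hpos,
          integral_toReal_lintegral_of_lintegral_bind_ne_top hκ hfneg hneg]
    _ = ∫ a, ∫ x, f x ∂κ a ∂m := integral_congr_ae <|
        (ae_integrable_of_integrable_bind hκ hf.stronglyMeasurable hint).mono fun _ ha ↦
          (integral_eq_lintegral_pos_part_sub_lintegral_neg_part ha).symm

end MeasureTheory.Measure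

lemma integral_eq_measureReal_univ_mul_integral_normalized {X : Type*} [MeasurableSpace X]
    (Λ : Measure X) [IsFiniteMeasure Λ] (f : X → ℝ) :
    ∫ x, f x ∂Λ = Λ.real Set.univ * ∫ x, f x ∂((Λ Set.univ)⁻¹ • Λ) := by
  rcases eq_zero_or_neZero Λ with rfl | _
  · simp
  rw [integral_smul_measure, smul_eq_mul, ← mul_assoc, toReal_inv, ← measureReal_def,
    mul_inv_cancel₀ (measureReal_univ_pos (μ := Λ)).ne', one_mul]

theorem normalized_intensity_score_strictly_consistent_general
    {Ω X : Type*} [MeasurableSpace Ω] [MeasurableSpace X]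
    (μ : Measure Ω)
    (Φ : Ω → Measure X)
    (hΦmeas : ∀ B : Set X, MeasurableSet B → Measurable fun ω => Φ ω B)
    (Λ : Measure X) [IsFiniteMeasure Λ]
    (hΛ : ∀ B : Set X, MeasurableSet B → Λ B = ∫⁻ ω, Φ ω B ∂μ)
    (hΛpos : 0 < Λ Set.univ)
    (𝓕 : Set (Measure X))
    (hmem : (Λ Set.univ)⁻¹ • Λ ∈ 𝓕)
    (S' : Measure X → X → ℝ)
    (hS'meas : ∀ Q ∈ 𝓕, Measurable (S' Q))
    (hS'int : ∀ Q ∈ 𝓕, Integrable (S' Q) Λ)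
    (hS' : ∀ P ∈ 𝓕, ∀ Q ∈ 𝓕,
      (∫ x, S' P x ∂P ≤ ∫ x, S' Q x ∂P) ∧
      (∫ x, S' Q x ∂P = ∫ x, S' P x ∂P → Q = P)) :
    ∀ Q ∈ 𝓕,
      (∫ ω, ∫ x, S' ((Λ Set.univ)⁻¹ • Λ) x ∂(Φ ω) ∂μ ≤
        ∫ ω, ∫ x, S' Q x ∂(Φ ω) ∂μ) ∧
      (∫ ω, ∫ x, S' Q x ∂(Φ ω) ∂μ =
          ∫ ω, ∫ x, S' ((Λ Set.univ)⁻¹ • Λ) x ∂(Φ ω) ∂μ ↔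
        Q = (Λ Set.univ)⁻¹ • Λ) := by
  intro Q hQ
  have hΦ : Measurable Φ := Measure.measurable_of_measurable_coe _ hΦmeas
  have hbind : Λ = μ.bind Φ := by
    ext B hB
    rw [hΛ B hB, Measure.bind_apply hB hΦ.aemeasurable]
  have hcampbell : ∀ R ∈ 𝓕, ∫ ω, ∫ x, S' R x ∂Φ ω ∂μ =
      Λ.real Set.univ * ∫ x, S' R x ∂((Λ Set.univ)⁻¹ • Λ) := fun R hR ↦ by
    rw [← integral_eq_measureReal_univ_mul_integral_normalized, hbind,
      Measure.integral_bind hΦ (hS'meas R hR) (hbind ▸ hS'int R hR)]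
  have hmass : 0 < Λ.real Set.univ := ENNReal.toReal_pos hΛpos.ne' (measure_ne_top Λ _)
  obtain ⟨hle, heq⟩ := hS' _ hmem Q hQ
  rw [hcampbell _ hmem, hcampbell Q hQ]
  exact ⟨mul_le_mul_of_nonneg_left hle hmass.le,
    fun h ↦ heq (mul_left_cancel₀ hmass.ne' h), fun h ↦ h ▸ rfl⟩

/-- **Strictly consistent scoring for the normalized intensity measure.**
If `S'` is strictly consistent for the identity on a class `𝓕` of probability
measures containing the normalized intensity `Λ* = Λ / Λ(X)` of the point
process `Φ`, then `S(Q, φ) = ∫ S'(Q, x) dφ(x)` is strictly consistent for the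
normalized intensity measure. -/
theorem normalized_intensity_score_strictly_consistent
    {Ω X : Type*} [MeasurableSpace Ω] [MeasurableSpace X]
    (μ : Measure Ω) [IsProbabilityMeasure μ]
    (Φ : Ω → Measure X)
    (hΦmeas : ∀ B : Set X, MeasurableSet B → Measurable fun ω => Φ ω B)
    (Λ : Measure X) [IsFiniteMeasure Λ]
    (hΛ : ∀ B : Set X, MeasurableSet B → Λ B = ∫⁻ ω, Φ ω B ∂μ)
    (hΛpos : 0 < Λ Set.univ)
    (𝓕 : Set (Measure X)) (hprob : ∀ P ∈ 𝓕, IsProbabilityMeasure P)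
    (hmem : (Λ Set.univ)⁻¹ • Λ ∈ 𝓕)
    (S' : Measure X → X → ℝ)
    (hS'meas : ∀ Q ∈ 𝓕, Measurable (S' Q))
    (hS'int : ∀ Q ∈ 𝓕, Integrable (S' Q) Λ)
    (hS' : ∀ P ∈ 𝓕, ∀ Q ∈ 𝓕,
      (∫ x, S' P x ∂P ≤ ∫ x, S' Q x ∂P) ∧
      (∫ x, S' Q x ∂P = ∫ x, S' P x ∂P → Q = P)) :
    ∀ Q ∈ 𝓕,
      (∫ ω, ∫ x, S' ((Λ Set.univ)⁻¹ • Λ) x ∂(Φ ω) ∂μ ≤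
        ∫ ω, ∫ x, S' Q x ∂(Φ ω) ∂μ) ∧
      (∫ ω, ∫ x, S' Q x ∂(Φ ω) ∂μ =
          ∫ ω, ∫ x, S' ((Λ Set.univ)⁻¹ • Λ) x ∂(Φ ω) ∂μ ↔
        Q = (Λ Set.univ)⁻¹ • Λ) :=
  normalized_intensity_score_strictly_consistent_general μ Φ hΦmeas Λ hΛ hΛpos 𝓕 hmem S' hS'meas
    hS'int hS'
end

section
/- Let X be a measurable space, M_f a class of finite nonzero measures on X, and Φ : Ω → Measure(X) a point process whose intensity measure Λ (defined by Λ(B) = E[Φ(B)]) lies in M_f. Let ℱ = {Q / Q(X) : Q ∈ M_f} and let S' : ℱ × X → ℝ be a measurable strictly consistent scoring function for the identity on ℱ with S'(Q*, ·) Λ-integrable for all Q ∈ M_f. Let b : [0, ∞) × [0, ∞) → ℝ be a strictly consistent Bregman function, i.e. b(x, m) = −f(x) − f'(x)(m − x) for a strictly convex f with subgradient f'. Fix c > 0 and define S(Q, φ) = ∫_X S'(Q / Q(X), x) dφ(x) + c · b(Q(X), φ(X)). Then, assuming E[Φ(X)] and the relevant expectations are finite, for every Q ∈ M_f one has E[S(Q,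 Φ)] ≥ E[S(Λ, Φ)], with equality if and only if Q = Λ; i.e. S is a strictly consistent scoring function for the (unnormalized) intensity measure. -/
/-!
Campbell's theorem turns the expected score into `∫ S'(Q*) dΛ + c · b(Q(X), Λ(X))`: the first
term because `E[∫ g dΦ] = ∫ g dΛ`, the second because `b(x, m)` is affine in `m` and
`E[Φ(X)] = Λ(X)`. Writing `∫ S'(Q*) dΛ = Λ(X) · ∫ S'(Q*) dΛ*`, both terms are minimised at
`Q = Λ`, by consistency of `S'` and of `b`; equality forces `Q* = Λ*` and `Q(X) = Λ(X)`,
hence `Q = Λ`.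
-/

open MeasureTheory ProbabilityTheory Set
open scoped ENNReal

namespace MeasureTheory.Measure

variable {α β E : Type*} {mα : MeasurableSpace α} {mβ : MeasurableSpace β}
  [NormedAddCommGroup E] [NormedSpace ℝ E] {κ : Kernel α β} {μ : Measure α} {f : β → E}

lemma integrable_integral_of_integrable_comp (hf : Integrable f (κ ∘ₘ μ)) :
    Integrable (fun x ↦ ∫ y, f y ∂κ x) μ := by
  rw [comp_eq_comp_const_apply] at hf
  simpa using hf.integral_comp

lemma integral_integral_eq_integral_comp (hf : Integrable f (κ ∘ₘ μ)) :
    ∫ x, ∫ y, f y ∂κ x ∂μ = ∫ y, f y ∂(κ ∘ₘ μ) := by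
  rw [comp_eq_comp_const_apply] at hf
  rw [comp_eq_comp_const_apply, Kernel.integral_comp hf]
  simp

lemma integral_eq_toReal_measure_univ_mul_integral_inv_smul {Q : Measure α} [IsFiniteMeasure Q]
    (g : α → ℝ) : ∫ x, g x ∂Q = (Q univ).toReal * ∫ x, g x ∂((Q univ)⁻¹ • Q) := by
  rcases eq_or_ne Q 0 with rfl | hQ
  · simp
  have hpos : 0 < (Q univ).toReal :=
    ENNReal.toReal_pos (measure_univ_ne_zero.2 hQ) (measure_ne_top Q univ)
  rw [integral_smul_measure, ENNReal.toReal_inv, smul_eq_mul, ← mul_assoc,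
    mul_inv_cancel₀ hpos.ne', one_mul]

lemma eq_of_inv_smul_eq {P Q : Measure α} [IsFiniteMeasure P] (hQP : Q univ = P univ)
    (h : (Q univ)⁻¹ • Q = (P univ)⁻¹ • P) : Q = P := by
  rcases eq_or_ne (P univ) 0 with hP | hP
  · rw [measure_univ_eq_zero.1 hP, measure_univ_eq_zero.1 (hQP.trans hP)]
  rw [hQP] at h
  simpa [smul_smul, ENNReal.mul_inv_cancel hP (measure_ne_top P univ)]
    using congrArg (P univ • ·) h

end MeasureTheory.Measure

section Bregman

variable {s : Set ℝ} {f f' : ℝ → ℝ} {x m : ℝ}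

def bregman (f f' : ℝ → ℝ) (x m : ℝ) : ℝ := -f x - f' x * (m - x)

lemma bregman_self_le (hsub : f x + f' x * (m - x) ≤ f m) :
    bregman f f' m m ≤ bregman f f' x m := by
  simp only [bregman]
  linarith

/-- Strict convexity puts `f` strictly below its chord at the midpoint of `x` and `m`, while the
tangent at `x` stays below `f`; so the tangent cannot touch `f` at `m ≠ x`. -/
lemma StrictConvexOn.eq_of_bregman_eq_self (hf : StrictConvexOn ℝ s f)
    (hsub : ∀ y ∈ s, f x + f' x * (y - x) ≤ f y) (hx : x ∈ s) (hm : m ∈ s)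
    (h : bregman f f' x m = bregman f f' m m) : x = m := by
  by_contra hxm
  have hchord := hf.2 hx hm hxm one_half_pos one_half_pos (by norm_num)
  have htangent := hsub _ (hf.1 hx hm one_half_pos.le one_half_pos.le (by norm_num))
  simp only [bregman, smul_eq_mul] at h hchord htangent
  linarith

end Bregman

section PointProcess

variable {Ω X E : Type*} [MeasurableSpace Ω] [MeasurableSpace X]
  [NormedAddCommGroup E] [NormedSpace ℝ E]

def HasIntensity (μ : Measure Ω) (Φ : Ω → Measure X) (Λ : Measure X) : Prop :=
  ∀ B : Set X, MeasurableSet B → Λ B = ∫⁻ ω, Φ ω B ∂μ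

namespace HasIntensity

variable {μ : Measure Ω} {Φ : Ω → Measure X} {Λ : Measure X}

lemma eq_comp (hΛ : HasIntensity μ Φ Λ)
    (hΦ : ∀ B : Set X, MeasurableSet B → Measurable fun ω ↦ Φ ω B) :
    Λ = (⟨Φ, Measure.measurable_of_measurable_coe Φ hΦ⟩ : Kernel Ω X) ∘ₘ μ := by
  ext B hB
  rw [hΛ B hB, Measure.bind_apply hB (Kernel.aemeasurable _)]
  rfl

lemma integrable_integral (hΛ : HasIntensity μ Φ Λ)
    (hΦ : ∀ B : Set X, MeasurableSet B → Measurable fun ω ↦ Φ ω B)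
    {g : X → E} (hg : Integrable g Λ) : Integrable (fun ω ↦ ∫ x, g x ∂Φ ω) μ := by
  rw [hΛ.eq_comp hΦ] at hg
  exact Measure.integrable_integral_of_integrable_comp hg

/-- Campbell's theorem. -/
lemma integral_integral (hΛ : HasIntensity μ Φ Λ)
    (hΦ : ∀ B : Set X, MeasurableSet B → Measurable fun ω ↦ Φ ω B)
    {g : X → E} (hg : Integrable g Λ) : ∫ ω, ∫ x, g x ∂Φ ω ∂μ = ∫ x, g x ∂Λ := by
  rw [hΛ.eq_comp hΦ] at hg ⊢
  exact Measure.integral_integral_eq_integral_comp hg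

variable [IsFiniteMeasure Λ]

lemma integrable_toReal_measure_univ (hΛ : HasIntensity μ Φ Λ)
    (hΦ : ∀ B : Set X, MeasurableSet B → Measurable fun ω ↦ Φ ω B) :
    Integrable (fun ω ↦ (Φ ω univ).toReal) μ := by
  simpa [measureReal_def] using hΛ.integrable_integral hΦ (integrable_const (1 : ℝ))

lemma integral_toReal_measure_univ (hΛ : HasIntensity μ Φ Λ)
    (hΦ : ∀ B : Set X, MeasurableSet B → Measurable fun ω ↦ Φ ω B) :
    ∫ ω, (Φ ω univ).toReal ∂μ = (Λ univ).toReal := by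
  simpa [measureReal_def] using hΛ.integral_integral hΦ (integrable_const (1 : ℝ))

lemma integral_add_bregman [IsProbabilityMeasure μ] (hΛ : HasIntensity μ Φ Λ)
    (hΦ : ∀ B : Set X, MeasurableSet B → Measurable fun ω ↦ Φ ω B)
    {g : X → ℝ} (hg : Integrable g Λ) (f f' : ℝ → ℝ) (c q : ℝ) :
    ∫ ω, (∫ x, g x ∂Φ ω + c * bregman f f' q (Φ ω univ).toReal) ∂μ =
      ∫ x, g x ∂Λ + c * bregman f f' q (Λ univ).toReal := by
  have haffine : ∀ m, c * bregman f f' q m = c * (-f q + f' q * q) - c * f' q * m := by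
    intro m
    simp only [bregman]
    ring
  have hN := hΛ.integrable_toReal_measure_univ hΦ
  have hbregman : Integrable (fun ω ↦ c * (-f q + f' q * q) - c * f' q * (Φ ω univ).toReal) μ :=
    (integrable_const _).sub (hN.const_mul _)
  simp_rw [haffine]
  rw [integral_add (hΛ.integrable_integral hΦ hg) hbregman,
    integral_sub (integrable_const _) (hN.const_mul _), integral_const, integral_const_mul,
    hΛ.integral_integral hΦ hg, hΛ.integral_toReal_measure_univ hΦ]
  simp

end HasIntensity

end PointProcess

theorem intensity_score_strictly_consistent_general
    {Ω X : Type*} [MeasurableSpace Ω] [MeasurableSpace X]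
    (μ : Measure Ω) [IsProbabilityMeasure μ]
    (Φ : Ω → Measure X)
    (hΦmeas : ∀ B : Set X, MeasurableSet B → Measurable fun ω => Φ ω B)
    (Mf : Set (Measure X))
    (hMfFin : ∀ Q ∈ Mf, IsFiniteMeasure Q) (hMfNe : ∀ Q ∈ Mf, Q ≠ 0)
    (Λ : Measure X) (hΛMf : Λ ∈ Mf)
    (hΛ : ∀ B : Set X, MeasurableSet B → Λ B = ∫⁻ ω, Φ ω B ∂μ)
    -- the class of normalized measures and the score `S'` on it
    (𝓕 : Set (Measure X)) (h𝓕 : 𝓕 = (fun Q => (Q Set.univ)⁻¹ • Q) '' Mf)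
    (S' : Measure X → X → ℝ)
    (hS'int : ∀ Q ∈ 𝓕, Integrable (S' Q) Λ)
    (hS' : ∀ P ∈ 𝓕, ∀ Q ∈ 𝓕,
      (∫ x, S' P x ∂P ≤ ∫ x, S' Q x ∂P) ∧
      (∫ x, S' Q x ∂P = ∫ x, S' P x ∂P → Q = P))
    -- a strictly consistent Bregman function `b` on `[0, ∞)`
    (f f' : ℝ → ℝ) (hf : StrictConvexOn ℝ (Set.Ici 0) f)
    (hsub : ∀ x ∈ Set.Ici (0:ℝ), ∀ m ∈ Set.Ici (0:ℝ),
      f x + f' x * (m - x) ≤ f m)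
    (b : ℝ → ℝ → ℝ) (hb : ∀ x m, b x m = -f x - f' x * (m - x))
    (c : ℝ) (hc : 0 < c)
    -- the combined score
    (Sc : Measure X → Measure X → ℝ)
    (hSc : ∀ Q φ, Sc Q φ = (∫ x, S' ((Q Set.univ)⁻¹ • Q) x ∂φ) +
      c * b (Q Set.univ).toReal (φ Set.univ).toReal) :
    ∀ Q ∈ Mf,
      (∫ ω, Sc Λ (Φ ω) ∂μ ≤ ∫ ω, Sc Q (Φ ω) ∂μ) ∧
      (∫ ω, Sc Q (Φ ω) ∂μ = ∫ ω, Sc Λ (Φ ω) ∂μ ↔ Q = Λ) := by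
  intro Q hQ
  have := hMfFin Λ hΛMf
  have := hMfFin Q hQ
  obtain rfl : b = bregman f f' := funext₂ hb
  have hnormalize : ∀ P ∈ Mf, (P univ)⁻¹ • P ∈ 𝓕 := fun P hP ↦ h𝓕 ▸ ⟨P, hP, rfl⟩
  set lam := (Λ univ).toReal
  have hlam : 0 < lam :=
    ENNReal.toReal_pos (Measure.measure_univ_ne_zero.2 (hMfNe Λ hΛMf)) (measure_ne_top Λ univ)
  have hexpected : ∀ P ∈ Mf, ∫ ω, Sc P (Φ ω) ∂μ =
      lam * ∫ x, S' ((P univ)⁻¹ • P) x ∂((Λ univ)⁻¹ • Λ) +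
        c * bregman f f' (P univ).toReal lam := fun P hP ↦ by
    simp_rw [hSc]
    rw [HasIntensity.integral_add_bregman hΛ hΦmeas (hS'int _ (hnormalize P hP)),
      Measure.integral_eq_toReal_measure_univ_mul_integral_inv_smul]
  obtain ⟨hS'le, hS'eq⟩ := hS' _ (hnormalize Λ hΛMf) _ (hnormalize Q hQ)
  have hscore := mul_le_mul_of_nonneg_left hS'le hlam.le
  have hbregman := mul_le_mul_of_nonneg_left
    (bregman_self_le (hsub (Q univ).toReal ENNReal.toReal_nonneg lam hlam.le)) hc.le
  rw [hexpected Q hQ, hexpected Λ hΛMf]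
  refine ⟨add_le_add hscore hbregman, fun heq ↦ ?_, fun h ↦ h ▸ rfl⟩
  obtain ⟨hscore_eq, hbregman_eq⟩ := (add_eq_add_iff_eq_and_eq hscore hbregman).1 heq.symm
  have hmass : (Q univ).toReal = lam :=
    hf.eq_of_bregman_eq_self (hsub _ ENNReal.toReal_nonneg) ENNReal.toReal_nonneg hlam.le
      (mul_left_cancel₀ hc.ne' hbregman_eq).symm
  exact Measure.eq_of_inv_smul_eq
    ((ENNReal.toReal_eq_toReal_iff' (measure_ne_top Q univ) (measure_ne_top Λ univ)).1 hmass)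
    (hS'eq (mul_left_cancel₀ hlam.ne' hscore_eq).symm)

/-- **Strictly consistent scoring for the (unnormalized) intensity measure.**
Combining a strictly consistent score `S'` for the normalized intensity with a
strictly consistent Bregman function `b` for the expected total number of
points yields, for any `c > 0`, a strictly consistent scoring function
`S(Q, φ) = ∫ S'(Q*, x) dφ(x) + c · b(Q(X), φ(X))` for the intensity measure. -/
theorem intensity_score_strictly_consistent
    {Ω X : Type*} [MeasurableSpace Ω] [MeasurableSpace X]
    (μ : Measure Ω) [IsProbabilityMeasure μ]
    (Φ : Ω → Measure X)
    (hΦmeas : ∀ B : Set X, MeasurableSet B → Measurable fun ω => Φ ω B)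
    (Mf : Set (Measure X))
    (hMfFin : ∀ Q ∈ Mf, IsFiniteMeasure Q) (hMfNe : ∀ Q ∈ Mf, Q ≠ 0)
    (Λ : Measure X) (hΛMf : Λ ∈ Mf)
    (hΛ : ∀ B : Set X, MeasurableSet B → Λ B = ∫⁻ ω, Φ ω B ∂μ)
    -- `E[Φ(X)]` finite
    (hfirstMoment : ∫⁻ ω, Φ ω Set.univ ∂μ < ⊤)
    -- the class of normalized measures and the score `S'` on it
    (𝓕 : Set (Measure X)) (h𝓕 : 𝓕 = (fun Q => (Q Set.univ)⁻¹ • Q) '' Mf)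
    (S' : Measure X → X → ℝ)
    (hS'meas : ∀ Q ∈ 𝓕, Measurable (S' Q))
    (hS'int : ∀ Q ∈ 𝓕, Integrable (S' Q) Λ)
    (hS' : ∀ P ∈ 𝓕, ∀ Q ∈ 𝓕,
      (∫ x, S' P x ∂P ≤ ∫ x, S' Q x ∂P) ∧
      (∫ x, S' Q x ∂P = ∫ x, S' P x ∂P → Q = P))
    -- a strictly consistent Bregman function `b` on `[0, ∞)`
    (f f' : ℝ → ℝ) (hf : StrictConvexOn ℝ (Set.Ici 0) f)
    (hsub : ∀ x ∈ Set.Ici (0:ℝ), ∀ m ∈ Set.Ici (0:ℝ),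
      f x + f' x * (m - x) ≤ f m)
    (b : ℝ → ℝ → ℝ) (hb : ∀ x m, b x m = -f x - f' x * (m - x))
    (c : ℝ) (hc : 0 < c)
    -- the combined score
    (Sc : Measure X → Measure X → ℝ)
    (hSc : ∀ Q φ, Sc Q φ = (∫ x, S' ((Q Set.univ)⁻¹ • Q) x ∂φ) +
      c * b (Q Set.univ).toReal (φ Set.univ).toReal)
    -- the relevant expectations are finite
    (hint : ∀ Q ∈ Mf, Integrable (fun ω => Sc Q (Φ ω)) μ) :
    ∀ Q ∈ Mf,
      (∫ ω, Sc Λ (Φ ω) ∂μ ≤ ∫ ω, Sc Q (Φ ω) ∂μ) ∧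
      (∫ ω, Sc Q (Φ ω) ∂μ = ∫ ω, Sc Λ (Φ ω) ∂μ ↔ Q = Λ) :=
  intensity_score_strictly_consistent_general μ Φ hΦmeas Mf hMfFin hMfNe Λ hΛMf hΛ 𝓕 h𝓕 S' hS'int
    hS' f f' hf hsub b hb c hc Sc hSc
end

section
/- Let X be a measurable space, n ∈ ℕ, and Φ : Ω → Measure(X) a point process. Define the n-th moment measure μ⁽ⁿ⁾ of Φ by μ⁽ⁿ⁾(A) = E[Φ^{⊗n}(A)] for Borel A ⊆ X^n, where Φ^{⊗n} is the n-fold product measure of Φ with itself, and assume 0 < μ⁽ⁿ⁾(X^n) < ∞. Let ℱ^n be a class of probability measures on X^n containing (μ⁽ⁿ⁾)* = μ⁽ⁿ⁾ / μ⁽ⁿ⁾(X^n), let S : ℱ^n × X^n → ℝ be a measurable strictly consistent scoring function for the identity on ℱ^n with S(ν, ·) μ⁽ⁿ⁾-integrable, and let b : [0, ∞) × [0, ∞) → ℝ be a strictly consistent Bregman function. Fix c > 0 and define S₁(μ, φ) = ∫_{X^n} S(μ / μ(X^n), x₁, …, xₙ) dφ^{⊗n}(x₁, …, xₙ) + c ·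 b(μ(X^n), φ(X)^n). Then, assuming all expectations are finite, for every finite nonzero measure μ on X^n in the relevant class, E[S₁(μ, Φ)] ≥ E[S₁(μ⁽ⁿ⁾, Φ)], with equality if and only if μ = μ⁽ⁿ⁾; i.e. S₁ is a strictly consistent scoring function for the n-th moment measure. -/
/-!
The realisation `Φ^{⊗n}` is the finite product measure `Measure.pi`, so the moment measure is the
Giry bind `μ.bind (Φ^{⊗n})` and Fubini for `bind` gives
`E[S₁(ν, Φ)] = μ⁽ⁿ⁾(Xⁿ) · ∫ S(ν*) d(μ⁽ⁿ⁾)* + c · b(ν(Xⁿ), μ⁽ⁿ⁾(Xⁿ))`, the Bregman part being affine in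
its second argument. Both summands are minimised at `ν = μ⁽ⁿ⁾`, the first exactly when
`ν* = (μ⁽ⁿ⁾)*` and the second exactly when `ν(Xⁿ) = μ⁽ⁿ⁾(Xⁿ)`; together these pin down `ν`.
-/

open MeasureTheory ProbabilityTheory Set

theorem Measurable.measure_pi {Ω ι : Type*} [MeasurableSpace Ω] [Fintype ι] {X : ι → Type*}
    [∀ i, MeasurableSpace (X i)] {Φ : Ω → ∀ i, Measure (X i)} [∀ ω i, IsFiniteMeasure (Φ ω i)]
    (hΦ : ∀ i s, MeasurableSet s → Measurable fun ω => Φ ω i s) :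
    Measurable fun ω => Measure.pi (Φ ω) := by
  refine .measure_of_isPiSystem generateFrom_pi.symm isPiSystem_pi ?_ ?_
  · rintro _ ⟨s, hs, rfl⟩
    simp_rw [Measure.pi_pi]
    exact Finset.measurable_prod _ fun i _ => hΦ i (s i) (hs i (mem_univ i))
  · simp_rw [Measure.pi_univ]
    exact Finset.measurable_prod _ fun i _ => hΦ i univ MeasurableSet.univ

namespace MeasureTheory

variable {Ω Y : Type*} [MeasurableSpace Ω] [MeasurableSpace Y] {μ : Measure Ω}
  {κ : Ω → Measure Y}

theorem Measure.integral_bind_s6 {E : Type*} [NormedAddCommGroup E] [NormedSpace ℝ E]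
    (hκ : Measurable κ) {g : Y → E} (hg : Integrable g (μ.bind κ)) :
    ∫ y, g y ∂μ.bind κ = ∫ ω, ∫ y, g y ∂κ ω ∂μ :=
  Kernel.integral_comp (η := ⟨κ, hκ⟩) (κ := Kernel.const Unit μ) (a := ()) hg

theorem Integrable.integral_bind_s6 {E : Type*} [NormedAddCommGroup E] [NormedSpace ℝ E]
    (hκ : Measurable κ) {g : Y → E} (hg : Integrable g (μ.bind κ)) :
    Integrable (fun ω => ∫ y, g y ∂κ ω) μ :=
  Integrable.integral_comp (η := ⟨κ, hκ⟩) (κ := Kernel.const Unit μ) (a := ()) hg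

theorem Measure.integral_eq_toReal_mul_integral_inv_smul {ρ : Measure Y} (h0 : ρ univ ≠ 0)
    (htop : ρ univ ≠ ⊤) (g : Y → ℝ) :
    ∫ y, g y ∂ρ = (ρ univ).toReal * ∫ y, g y ∂((ρ univ)⁻¹ • ρ) := by
  rw [integral_smul_measure, ENNReal.toReal_inv, smul_eq_mul, ← mul_assoc,
    mul_inv_cancel₀ (ENNReal.toReal_ne_zero.mpr ⟨h0, htop⟩), one_mul]

theorem Measure.eq_of_inv_smul_eq_s6 {ν ρ : Measure Y} (hρ : 0 < (ρ univ).toReal)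
    (hu : (ν univ).toReal = (ρ univ).toReal) (hn : (ν univ)⁻¹ • ν = (ρ univ)⁻¹ • ρ) :
    ν = ρ := by
  obtain ⟨hρ0, hρtop⟩ := ENNReal.toReal_pos_iff.mp hρ
  obtain ⟨hν0, hνtop⟩ := ENNReal.toReal_pos_iff.mp (hu ▸ hρ)
  have hu' : ν univ = ρ univ := (ENNReal.toReal_eq_toReal_iff' hνtop.ne hρtop.ne).mp hu
  calc ν = ν univ • ((ν univ)⁻¹ • ν) := by
          rw [smul_smul, ENNReal.mul_inv_cancel hν0.ne' hνtop.ne, one_smul]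
    _ = ρ univ • ((ρ univ)⁻¹ • ρ) := by rw [hn, hu']
    _ = ρ := by rw [smul_smul, ENNReal.mul_inv_cancel hρ0.ne' hρtop.ne, one_smul]

end MeasureTheory

theorem StrictConvexOn.add_mul_sub_lt_of_subgradient {s : Set ℝ} {f f' : ℝ → ℝ}
    (hf : StrictConvexOn ℝ s f) {x m : ℝ} (hx : x ∈ s) (hm : m ∈ s)
    (hsub : ∀ y ∈ s, f x + f' x * (y - x) ≤ f y) (hne : x ≠ m) :
    f x + f' x * (m - x) < f m := by
  have hmid : f ((1 / 2 : ℝ) • x + (1 / 2 : ℝ) • m) < (1 / 2 : ℝ) • f x + (1 / 2 : ℝ) • f m :=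
    hf.2 hx hm hne (by norm_num) (by norm_num) (by norm_num)
  have hmid_mem : (1 / 2 : ℝ) • x + (1 / 2 : ℝ) • m ∈ s :=
    hf.1 hx hm (by norm_num) (by norm_num) (by norm_num)
  have hsub_mid := hsub _ hmid_mem
  simp only [smul_eq_mul] at hmid hsub_mid
  linarith

section Bregman

variable {s : Set ℝ} {f f' : ℝ → ℝ} {b : ℝ → ℝ → ℝ}

theorem bregman_strictly_consistent (hf : StrictConvexOn ℝ s f)
    (hsub : ∀ x ∈ s, ∀ m ∈ s, f x + f' x * (m - x) ≤ f m)
    (hb : ∀ x m, b x m = -f x - f' x * (m - x)) {x m : ℝ} (hx : x ∈ s) (hm : m ∈ s) :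
    b m m ≤ b x m ∧ (b x m = b m m → x = m) := by
  simp only [hb, sub_self, mul_zero, sub_zero]
  refine ⟨by linarith [hsub x hx m hm], fun heq => ?_⟩
  by_contra hne
  linarith [hf.add_mul_sub_lt_of_subgradient hx hm (hsub x hx) hne]

theorem integral_bregman {Ω : Type*} [MeasurableSpace Ω] {μ : Measure Ω} [IsProbabilityMeasure μ]
    (hb : ∀ x m, b x m = -f x - f' x * (m - x)) {M : Ω → ℝ} (hM : Integrable M μ) (x : ℝ) :
    ∫ ω, b x (M ω) ∂μ = b x (∫ ω, M ω ∂μ) := by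
  have hM_sub : Integrable (fun ω => M ω - x) μ := hM.sub (integrable_const x)
  simp_rw [hb]
  rw [integral_sub (integrable_const _) (hM_sub.const_mul _), integral_const_mul,
    integral_sub hM (integrable_const x)]
  simp

end Bregman

theorem mul_add_mul_eq_iff_of_le {T c A A' B B' : ℝ} (hT : 0 < T) (hc : 0 < c) (hA : A ≤ A')
    (hB : B ≤ B') : T * A + c * B = T * A' + c * B' ↔ A = A' ∧ B = B' := by
  rw [add_eq_add_iff_eq_and_eq (mul_le_mul_of_nonneg_left hA hT.le)
    (mul_le_mul_of_nonneg_left hB hc.le), mul_right_inj' hT.ne', mul_right_inj' hc.ne']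

theorem integral_score_add_bregman {Ω Y : Type*} [MeasurableSpace Ω] [MeasurableSpace Y]
    {μ : Measure Ω} [IsProbabilityMeasure μ] {κ : Ω → Measure Y} (hκ : Measurable κ)
    [IsFiniteMeasure (μ.bind κ)] {f f' : ℝ → ℝ} {b : ℝ → ℝ → ℝ}
    (hb : ∀ x m, b x m = -f x - f' x * (m - x)) {g : Y → ℝ} (hg : Integrable g (μ.bind κ))
    (c x : ℝ) :
    ∫ ω, (∫ y, g y ∂κ ω) + c * b x ((κ ω).real univ) ∂μ =
      ∫ y, g y ∂μ.bind κ + c * b x ((μ.bind κ).real univ) := by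
  have hone : Integrable (fun _ => (1 : ℝ)) (μ.bind κ) := integrable_const 1
  have hmass : ∀ ρ : Measure Y, ∫ _, (1 : ℝ) ∂ρ = ρ.real univ := by simp
  have hmass_int : Integrable (fun ω => (κ ω).real univ) μ := by
    simpa only [hmass] using hone.integral_bind_s6 hκ
  have hmass_eq : ∫ ω, (κ ω).real univ ∂μ = (μ.bind κ).real univ := by
    simpa only [hmass] using (Measure.integral_bind_s6 hκ hone).symm
  have hbregman_int : Integrable (fun ω => c * b x ((κ ω).real univ)) μ := by
    simp_rw [hb]
    exact ((integrable_const _).sub ((hmass_int.sub (integrable_const x)).const_mul _)).const_mul c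
  rw [integral_add (hg.integral_bind_s6 hκ) hbregman_int, integral_const_mul,
    integral_bregman hb hmass_int, hmass_eq, Measure.integral_bind_s6 hκ hg]

theorem moment_measure_score_strictly_consistent_general
    {Ω X : Type*} [MeasurableSpace Ω] [MeasurableSpace X] (n : ℕ)
    (μ : Measure Ω) [IsProbabilityMeasure μ]
    (Φ : Ω → Measure X)
    (hΦmeas : ∀ B : Set X, MeasurableSet B → Measurable fun ω => Φ ω B)
    (hΦfin : ∀ ω, IsFiniteMeasure (Φ ω))
    -- `pp ω` is the n-fold product measure `(Φ ω)^{⊗n}`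
    (pp : Ω → Measure (Fin n → X))
    (hpp : ∀ ω, ∀ s : Fin n → Set X, (∀ i, MeasurableSet (s i)) →
      pp ω (Set.univ.pi s) = ∏ i, Φ ω (s i))
    -- the n-th moment measure
    (μn : Measure (Fin n → X))
    (hμn : ∀ A : Set (Fin n → X), MeasurableSet A → μn A = ∫⁻ ω, pp ω A ∂μ)
    (hμnPos : 0 < μn Set.univ) (hμnFin : μn Set.univ < ⊤)
    -- the class of candidate moment measures, containing `μn`
    (𝓜 : Set (Measure (Fin n → X))) (hμnMem : μn ∈ 𝓜)
    -- the class `ℱⁿ` of probability measures on `Xⁿ` and the score `S` on it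
    (𝓕n : Set (Measure (Fin n → X)))
    (hmemNorm : ∀ ν ∈ 𝓜, (ν Set.univ)⁻¹ • ν ∈ 𝓕n)
    (S : Measure (Fin n → X) → (Fin n → X) → ℝ)
    (hSint : ∀ P ∈ 𝓕n, Integrable (S P) μn)
    (hS : ∀ P ∈ 𝓕n, ∀ Q ∈ 𝓕n,
      (∫ x, S P x ∂P ≤ ∫ x, S Q x ∂P) ∧
      (∫ x, S Q x ∂P = ∫ x, S P x ∂P → Q = P))
    -- a strictly consistent Bregman function `b` on `[0, ∞)`
    (f f' : ℝ → ℝ) (hf : StrictConvexOn ℝ (Set.Ici 0) f)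
    (hsub : ∀ x ∈ Set.Ici (0:ℝ), ∀ m ∈ Set.Ici (0:ℝ),
      f x + f' x * (m - x) ≤ f m)
    (b : ℝ → ℝ → ℝ) (hb : ∀ x m, b x m = -f x - f' x * (m - x))
    (c : ℝ) (hc : 0 < c)
    -- the combined score `S₁`, evaluated at the report `ν` and a realization
    (S₁ : Measure (Fin n → X) → Ω → ℝ)
    (hS₁ : ∀ ν ω, S₁ ν ω = (∫ x, S ((ν Set.univ)⁻¹ • ν) x ∂(pp ω)) +
      c * b (ν Set.univ).toReal (((Φ ω Set.univ).toReal) ^ n)) :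
    ∀ ν ∈ 𝓜,
      (∫ ω, S₁ μn ω ∂μ ≤ ∫ ω, S₁ ν ω ∂μ) ∧
      (∫ ω, S₁ ν ω ∂μ = ∫ ω, S₁ μn ω ∂μ ↔ ν = μn) := by
  have hpp_pi : pp = fun ω => Measure.pi fun _ => Φ ω :=
    funext fun ω => (Measure.pi_eq (hpp ω)).symm
  have hκ : Measurable pp := hpp_pi ▸ .measure_pi fun _ => hΦmeas
  have hbind : μ.bind pp = μn :=
    Measure.ext fun A hA => by rw [Measure.bind_apply hA hκ.aemeasurable, hμn A hA]
  have : IsFiniteMeasure (μ.bind pp) := by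
    rw [hbind]; exact ⟨hμnFin⟩
  set T := (μn univ).toReal
  have hT : 0 < T := ENNReal.toReal_pos hμnPos.ne' hμnFin.ne
  have hexpected : ∀ ν ∈ 𝓜, ∫ ω, S₁ ν ω ∂μ =
      T * ∫ x, S ((ν univ)⁻¹ • ν) x ∂((μn univ)⁻¹ • μn) + c * b (ν univ).toReal T := by
    intro ν hν
    have hmass : ∀ ω, (Φ ω univ).toReal ^ n = (pp ω).real univ := by
      simp [hpp_pi, measureReal_def, Measure.pi_univ]
    simp_rw [hS₁, hmass]
    rw [integral_score_add_bregman hκ hb (hbind ▸ hSint _ (hmemNorm ν hν)), hbind,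
      Measure.integral_eq_toReal_mul_integral_inv_smul hμnPos.ne' hμnFin.ne, measureReal_def]
  intro ν hν
  obtain ⟨hS_le, hS_eq⟩ := hS _ (hmemNorm μn hμnMem) _ (hmemNorm ν hν)
  obtain ⟨hb_le, hb_eq⟩ := bregman_strictly_consistent hf hsub hb
    (ENNReal.toReal_nonneg (a := ν univ)) hT.le
  rw [hexpected ν hν, hexpected μn hμnMem, eq_comm, mul_add_mul_eq_iff_of_le hT hc hS_le hb_le]
  refine ⟨by gcongr, fun ⟨hA, hB⟩ => ?_, by rintro rfl; exact ⟨rfl, rfl⟩⟩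
  exact Measure.eq_of_inv_smul_eq_s6 hT (hb_eq hB.symm) (hS_eq hA.symm)

/-- **Strictly consistent scoring for the n-th moment measure.**
Let `pp ω` be the `n`-fold product measure `(Φ ω)^{⊗n}` of the point process
`Φ`, characterized on measurable rectangles, and let the `n`-th moment measure
`μ⁽ⁿ⁾` satisfy `μ⁽ⁿ⁾(A) = E[(Φ)^{⊗n}(A)]`. Combining a strictly consistent
score `S` for the normalized moment measure with a strictly consistent Bregman
function `b` yields a strictly consistent scoring function
`S₁(ν, φ) = ∫ S(ν*, ·) dφ^{⊗n} + c · b(ν(Xⁿ), φ(X)ⁿ)` for `μ⁽ⁿ⁾`. -/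
theorem moment_measure_score_strictly_consistent
    {Ω X : Type*} [MeasurableSpace Ω] [MeasurableSpace X] (n : ℕ)
    (μ : Measure Ω) [IsProbabilityMeasure μ]
    (Φ : Ω → Measure X)
    (hΦmeas : ∀ B : Set X, MeasurableSet B → Measurable fun ω => Φ ω B)
    (hΦfin : ∀ ω, IsFiniteMeasure (Φ ω))
    -- `pp ω` is the n-fold product measure `(Φ ω)^{⊗n}`
    (pp : Ω → Measure (Fin n → X))
    (hpp : ∀ ω, ∀ s : Fin n → Set X, (∀ i, MeasurableSet (s i)) →
      pp ω (Set.univ.pi s) = ∏ i, Φ ω (s i))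
    -- the n-th moment measure
    (μn : Measure (Fin n → X))
    (hμn : ∀ A : Set (Fin n → X), MeasurableSet A → μn A = ∫⁻ ω, pp ω A ∂μ)
    (hμnPos : 0 < μn Set.univ) (hμnFin : μn Set.univ < ⊤)
    -- the class of candidate moment measures, containing `μn`
    (𝓜 : Set (Measure (Fin n → X))) (hμnMem : μn ∈ 𝓜)
    (h𝓜fin : ∀ ν ∈ 𝓜, IsFiniteMeasure ν) (h𝓜ne : ∀ ν ∈ 𝓜, ν ≠ 0)
    -- the class `ℱⁿ` of probability measures on `Xⁿ` and the score `S` on it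
    (𝓕n : Set (Measure (Fin n → X)))
    (hmemNorm : ∀ ν ∈ 𝓜, (ν Set.univ)⁻¹ • ν ∈ 𝓕n)
    (S : Measure (Fin n → X) → (Fin n → X) → ℝ)
    (hSmeas : ∀ P ∈ 𝓕n, Measurable (S P))
    (hSint : ∀ P ∈ 𝓕n, Integrable (S P) μn)
    (hS : ∀ P ∈ 𝓕n, ∀ Q ∈ 𝓕n,
      (∫ x, S P x ∂P ≤ ∫ x, S Q x ∂P) ∧
      (∫ x, S Q x ∂P = ∫ x, S P x ∂P → Q = P))
    -- a strictly consistent Bregman function `b` on `[0, ∞)`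
    (f f' : ℝ → ℝ) (hf : StrictConvexOn ℝ (Set.Ici 0) f)
    (hsub : ∀ x ∈ Set.Ici (0:ℝ), ∀ m ∈ Set.Ici (0:ℝ),
      f x + f' x * (m - x) ≤ f m)
    (b : ℝ → ℝ → ℝ) (hb : ∀ x m, b x m = -f x - f' x * (m - x))
    (c : ℝ) (hc : 0 < c)
    -- the combined score `S₁`, evaluated at the report `ν` and a realization
    (S₁ : Measure (Fin n → X) → Ω → ℝ)
    (hS₁ : ∀ ν ω, S₁ ν ω = (∫ x, S ((ν Set.univ)⁻¹ • ν) x ∂(pp ω)) +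
      c * b (ν Set.univ).toReal (((Φ ω Set.univ).toReal) ^ n))
    -- all expectations are assumed finite
    (hint : ∀ ν ∈ 𝓜, Integrable (S₁ ν) μ) :
    ∀ ν ∈ 𝓜,
      (∫ ω, S₁ μn ω ∂μ ≤ ∫ ω, S₁ ν ω ∂μ) ∧
      (∫ ω, S₁ ν ω ∂μ = ∫ ω, S₁ μn ω ∂μ ↔ ν = μn) :=
  moment_measure_score_strictly_consistent_general n μ Φ hΦmeas hΦfin pp hpp μn hμn hμnPos hμnFin 𝓜
    hμnMem 𝓕n hmemNorm S hSint hS f f' hf hsub b hb c hc S₁ hS₁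
end

section
/- Let (X, ν) be a finite measure space (e.g. a bounded Borel subset of ℝ^d with Lebesgue measure) and Φ : Ω → Measure(X) a point process whose intensity measure Λ (with Λ(B) = E[Φ(B)]) has a ν-density λ : X → (0, ∞) with 0 < ∫ λ dν < ∞. For finite measures Q with ν-density q : X → (0, ∞), define S(Q, φ) = −∫_X log q(x) dφ(x) + ∫_X q dν. Assume ∫ λ |log q| dν < ∞ and ∫ λ |log λ| dν < ∞ and ∫ q dν < ∞ for all reports considered. Then for every such report Q: E[S(Q, Φ)] ≥ E[S(Λ, Φ)], with equality if and only if q = λ ν-almost everywhere (i.e. Q = Λ). Hence the point-process analogue of the Dawid–Sebastiani score, obtained by evaluating every intensity report through the log-likelihood of the Poisson point process with that intensity, is a strictly consistent scoring function for the intensity measure. -/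
/-!
By Campbell's theorem, i.e. since the mixture `μ.bind Φ` is the intensity measure
`ν.withDensity lam`, the expected score of a report `q` is `∫ (q - lam log q) dν`. Its excess
over the expected score of `lam` is `∫ q · klFun (lam / q) dν`, where
`klFun t = t log t + 1 - t ≥ 0` vanishes only at `t = 1`; so the excess is nonnegative and
vanishes iff `q = lam` almost everywhere.
-/

open MeasureTheory ProbabilityTheory InformationTheory Real
open scoped ENNReal

namespace MeasureTheory.Measure

variable {Ω X E : Type*} [MeasurableSpace Ω] [MeasurableSpace X]
  [NormedAddCommGroup E] [NormedSpace ℝ E] {μ : Measure Ω} {Φ : Ω → Measure X}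

theorem integrable_integral_of_integrable_bind (hΦ : Measurable Φ) {f : X → E}
    (hf : Integrable f (μ.bind Φ)) : Integrable (fun ω => ∫ x, f x ∂Φ ω) μ :=
  Integrable.integral_comp (κ := Kernel.const Unit μ) (η := ⟨Φ, hΦ⟩) (a := ()) hf

theorem integral_bind_s9 (hΦ : Measurable Φ) {f : X → E} (hf : Integrable f (μ.bind Φ)) :
    ∫ x, f x ∂(μ.bind Φ) = ∫ ω, ∫ x, f x ∂Φ ω ∂μ :=
  Kernel.integral_comp (κ := Kernel.const Unit μ) (η := ⟨Φ, hΦ⟩) (a := ()) hf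

theorem bind_eq_withDensity_of_lintegral_eq (hΦ : Measurable Φ) {ν : Measure X}
    {ρ : X → ℝ≥0∞} (h : ∀ B, MeasurableSet B → ∫⁻ ω, Φ ω B ∂μ = ∫⁻ x in B, ρ x ∂ν) :
    μ.bind Φ = ν.withDensity ρ := by
  ext B hB
  rw [bind_apply hB hΦ.aemeasurable, h B hB, withDensity_apply _ hB]

end MeasureTheory.Measure

section WithDensityOfReal

variable {X : Type*} [MeasurableSpace X] {ν : Measure X} {lam : X → ℝ}

theorem integrable_withDensity_ofReal_iff (hlam : Measurable lam) (hlam0 : ∀ x, 0 ≤ lam x)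
    {g : X → ℝ} :
    Integrable g (ν.withDensity fun x => ENNReal.ofReal (lam x)) ↔
      Integrable (fun x => lam x * g x) ν := by
  rw [integrable_withDensity_iff_integrable_smul' hlam.ennreal_ofReal
    (ae_of_all _ fun _ => ENNReal.ofReal_lt_top)]
  simp only [ENNReal.toReal_ofReal (hlam0 _), smul_eq_mul]

theorem integral_withDensity_ofReal (hlam : Measurable lam) (hlam0 : ∀ x, 0 ≤ lam x)
    (g : X → ℝ) :
    ∫ x, g x ∂(ν.withDensity fun x => ENNReal.ofReal (lam x)) = ∫ x, lam x * g x ∂ν := by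
  rw [integral_withDensity_eq_integral_toReal_smul hlam.ennreal_ofReal
    (ae_of_all _ fun _ => ENNReal.ofReal_lt_top)]
  simp only [ENNReal.toReal_ofReal (hlam0 _), smul_eq_mul]

end WithDensityOfReal

theorem integrable_mul_of_integrable_mul_abs {X : Type*} [MeasurableSpace X] {ν : Measure X}
    {a g : X → ℝ} (ha : ∀ x, 0 ≤ a x)
    (hag : AEStronglyMeasurable (fun x => a x * g x) ν)
    (h : Integrable (fun x => a x * |g x|) ν) : Integrable (fun x => a x * g x) ν :=
  h.mono' hag (ae_of_all _ fun x => by rw [Real.norm_eq_abs, abs_mul, abs_of_nonneg (ha x)])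

theorem integral_integral_eq_integral_mul_of_intensity {Ω X : Type*} [MeasurableSpace Ω]
    [MeasurableSpace X] {μ : Measure Ω} {ν : Measure X} {Φ : Ω → Measure X}
    (hΦ : Measurable Φ) {lam : X → ℝ} (hlam : Measurable lam) (hlam0 : ∀ x, 0 ≤ lam x)
    (hΛ : ∀ B, MeasurableSet B → ∫⁻ ω, Φ ω B ∂μ = ∫⁻ x in B, ENNReal.ofReal (lam x) ∂ν)
    {g : X → ℝ} (hg : Integrable (fun x => lam x * g x) ν) :
    Integrable (fun ω => ∫ x, g x ∂Φ ω) μ ∧ ∫ ω, ∫ x, g x ∂Φ ω ∂μ = ∫ x, lam x * g x ∂ν := by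
  have hbind := Measure.bind_eq_withDensity_of_lintegral_eq hΦ hΛ
  have hg' : Integrable g (μ.bind Φ) := by
    rwa [hbind, integrable_withDensity_ofReal_iff hlam hlam0]
  refine ⟨Measure.integrable_integral_of_integrable_bind hΦ hg', ?_⟩
  rw [← Measure.integral_bind_s9 hΦ hg', hbind, integral_withDensity_ofReal hlam hlam0]

theorem mul_klFun_div {a b : ℝ} (ha : 0 < a) (hb : 0 < b) :
    b * klFun (a / b) = (b - a * log b) - (a - a * log a) := by
  rw [klFun, log_div ha.ne' hb.ne']
  field_simp
  ring

theorem integral_sub_mul_log_le_and_eq_iff {X : Type*} [MeasurableSpace X] {ν : Measure X}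
    {lam q : X → ℝ} (hlam : ∀ x, 0 < lam x) (hq : ∀ x, 0 < q x)
    (hlamInt : Integrable lam ν) (hqInt : Integrable q ν)
    (hlamlog : Integrable (fun x => lam x * log (lam x)) ν)
    (hqlog : Integrable (fun x => lam x * log (q x)) ν) :
    ∫ x, lam x - lam x * log (lam x) ∂ν ≤ ∫ x, q x - lam x * log (q x) ∂ν ∧
      (∫ x, q x - lam x * log (q x) ∂ν = ∫ x, lam x - lam x * log (lam x) ∂ν ↔
        q =ᵐ[ν] lam) := by
  have hFq : Integrable (fun x => q x - lam x * log (q x)) ν := hqInt.sub hqlog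
  have hFlam : Integrable (fun x => lam x - lam x * log (lam x)) ν := hlamInt.sub hlamlog
  have hdiff : ∫ x, q x - lam x * log (q x) ∂ν - ∫ x, lam x - lam x * log (lam x) ∂ν
      = ∫ x, q x * klFun (lam x / q x) ∂ν := by
    rw [← integral_sub hFq hFlam]
    simp only [mul_klFun_div (hlam _) (hq _)]
  have hkl_nonneg : 0 ≤ fun x => q x * klFun (lam x / q x) := fun x =>
    mul_nonneg (hq x).le (klFun_nonneg (div_pos (hlam x) (hq x)).le)
  have hkl_int : Integrable (fun x => q x * klFun (lam x / q x)) ν :=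
    (hFq.sub hFlam).congr (ae_of_all _ fun x => (mul_klFun_div (hlam x) (hq x)).symm)
  refine ⟨sub_nonneg.1 (hdiff ▸ integral_nonneg hkl_nonneg), ?_⟩
  rw [← sub_eq_zero, hdiff, integral_eq_zero_iff_of_nonneg hkl_nonneg hkl_int]
  refine Filter.eventually_congr (ae_of_all _ fun x => ?_)
  rw [Pi.zero_apply, mul_eq_zero, or_iff_right (hq x).ne',
    klFun_eq_zero_iff (div_pos (hlam x) (hq x)).le, div_eq_one_iff_eq (hq x).ne', eq_comm]

noncomputable def poissonScore {X : Type*} [MeasurableSpace X] (ν : Measure X) (p : X → ℝ)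
    (φ : Measure X) : ℝ :=
  -(∫ x, log (p x) ∂φ) + ∫ x, p x ∂ν

theorem integral_poissonScore {Ω X : Type*} [MeasurableSpace Ω]
    [MeasurableSpace X] {μ : Measure Ω} [IsProbabilityMeasure μ] {ν : Measure X}
    {Φ : Ω → Measure X} (hΦ : Measurable Φ) {lam : X → ℝ} (hlam : Measurable lam)
    (hlam0 : ∀ x, 0 ≤ lam x)
    (hΛ : ∀ B, MeasurableSet B → ∫⁻ ω, Φ ω B ∂μ = ∫⁻ x in B, ENNReal.ofReal (lam x) ∂ν)
    {p : X → ℝ} (hp : Integrable p ν) (hlogp : Integrable (fun x => lam x * log (p x)) ν) :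
    ∫ ω, poissonScore ν p (Φ ω) ∂μ = ∫ x, p x - lam x * log (p x) ∂ν := by
  obtain ⟨hint, heq⟩ := integral_integral_eq_integral_mul_of_intensity hΦ hlam hlam0 hΛ hlogp
  unfold poissonScore
  rw [integral_add hint.fun_neg (integrable_const _), integral_neg, heq, integral_const,
    integral_sub hp hlogp, probReal_univ, one_smul, neg_add_eq_sub]

theorem poisson_loglik_intensity_score_strictly_consistent_general
    {Ω X : Type*} [MeasurableSpace Ω] [MeasurableSpace X]
    (μ : Measure Ω) [IsProbabilityMeasure μ]
    (ν : Measure X)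
    (Φ : Ω → Measure X)
    (hΦmeas : ∀ B : Set X, MeasurableSet B → Measurable fun ω => Φ ω B)
    -- the intensity measure of `Φ` has `ν`-density `lam` with
    -- `0 < ∫ lam dν < ∞`
    (lam : X → ℝ) (hlamMeas : Measurable lam) (hlamPos : ∀ x, 0 < lam x)
    (hlamInt : Integrable lam ν)
    (hΛ : ∀ B : Set X, MeasurableSet B →
      ∫⁻ ω, Φ ω B ∂μ = ∫⁻ x in B, ENNReal.ofReal (lam x) ∂ν)
    -- a report: a positive `ν`-density `q`
    (q : X → ℝ) (hqMeas : Measurable q) (hqPos : ∀ x, 0 < q x)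
    -- integrability assumptions
    (hqInt : Integrable q ν)
    (hlogq : Integrable (fun x => lam x * |Real.log (q x)|) ν)
    (hloglam : Integrable (fun x => lam x * |Real.log (lam x)|) ν)
    -- the score
    (Sc : (X → ℝ) → Measure X → ℝ)
    (hSc : ∀ (p : X → ℝ) (φ : Measure X),
      Sc p φ = -(∫ x, Real.log (p x) ∂φ) + ∫ x, p x ∂ν) :
    (∫ ω, Sc lam (Φ ω) ∂μ ≤ ∫ ω, Sc q (Φ ω) ∂μ) ∧
    (∫ ω, Sc q (Φ ω) ∂μ = ∫ ω, Sc lam (Φ ω) ∂μ ↔ q =ᵐ[ν] lam) := by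
  have hΦ : Measurable Φ := Measure.measurable_of_measurable_coe Φ hΦmeas
  have hlam0 : ∀ x, 0 ≤ lam x := fun x => (hlamPos x).le
  have hlamlog : Integrable (fun x => lam x * log (lam x)) ν :=
    integrable_mul_of_integrable_mul_abs hlam0
      (hlamMeas.mul (measurable_log.comp hlamMeas)).aestronglyMeasurable hloglam
  have hqlog : Integrable (fun x => lam x * log (q x)) ν :=
    integrable_mul_of_integrable_mul_abs hlam0
      (hlamMeas.mul (measurable_log.comp hqMeas)).aestronglyMeasurable hlogq
  obtain rfl : Sc = poissonScore ν := funext₂ hSc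
  rw [integral_poissonScore hΦ hlamMeas hlam0 hΛ hqInt hqlog,
    integral_poissonScore hΦ hlamMeas hlam0 hΛ hlamInt hlamlog]
  exact integral_sub_mul_log_le_and_eq_iff hlamPos hqPos hlamInt hqInt hlamlog hqlog

/-- **Strict consistency of the Poisson point process (Dawid–Sebastiani type)
score for the intensity.** On a finite measure space `(X, ν)`, if the point
process `Φ` has intensity measure with `ν`-density `lam > 0`, then the score
`S(q, φ) = -∫ log q dφ + ∫ q dν` for reports given by positive `ν`-densities
`q` satisfies `E[S(q, Φ)] ≥ E[S(lam, Φ)]`, with equality iff `q = lam`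
`ν`-almost everywhere. -/
theorem poisson_loglik_intensity_score_strictly_consistent
    {Ω X : Type*} [MeasurableSpace Ω] [MeasurableSpace X]
    (μ : Measure Ω) [IsProbabilityMeasure μ]
    (ν : Measure X) [IsFiniteMeasure ν]
    (Φ : Ω → Measure X)
    (hΦmeas : ∀ B : Set X, MeasurableSet B → Measurable fun ω => Φ ω B)
    -- the intensity measure of `Φ` has `ν`-density `lam` with
    -- `0 < ∫ lam dν < ∞`
    (lam : X → ℝ) (hlamMeas : Measurable lam) (hlamPos : ∀ x, 0 < lam x)
    (hlamInt : Integrable lam ν) (hlamTotPos : 0 < ∫ x, lam x ∂ν)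
    (hΛ : ∀ B : Set X, MeasurableSet B →
      ∫⁻ ω, Φ ω B ∂μ = ∫⁻ x in B, ENNReal.ofReal (lam x) ∂ν)
    -- a report: a positive `ν`-density `q`
    (q : X → ℝ) (hqMeas : Measurable q) (hqPos : ∀ x, 0 < q x)
    -- integrability assumptions
    (hqInt : Integrable q ν)
    (hlogq : Integrable (fun x => lam x * |Real.log (q x)|) ν)
    (hloglam : Integrable (fun x => lam x * |Real.log (lam x)|) ν)
    -- the score
    (Sc : (X → ℝ) → Measure X → ℝ)
    (hSc : ∀ (p : X → ℝ) (φ : Measure X),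
      Sc p φ = -(∫ x, Real.log (p x) ∂φ) + ∫ x, p x ∂ν) :
    (∫ ω, Sc lam (Φ ω) ∂μ ≤ ∫ ω, Sc q (Φ ω) ∂μ) ∧
    (∫ ω, Sc q (Φ ω) ∂μ = ∫ ω, Sc lam (Φ ω) ∂μ ↔ q =ᵐ[ν] lam) :=
  poisson_loglik_intensity_score_strictly_consistent_general μ ν Φ hΦmeas lam hlamMeas hlamPos
    hlamInt hΛ q hqMeas hqPos hqInt hlogq hloglam Sc hSc
end

section
/- Let X ⊂ ℝ^d be a bounded Borel set and λ : X → (0, ∞) a Lebesgue-integrable intensity function. Let (𝒯_n)_{n ∈ ℕ} be a dissecting system of finite partitions of X into rectangles: the partitions are nested (each 𝒯_{n+1} refines 𝒯_n), the σ-algebras σ(𝒯_n) increase to the Borel σ-algebra of X, and any two distinct points of X are eventually separated, i.e. lie in different bins of 𝒯_n for all large n. For each n and each bin B ∈ 𝒯_n put λ_B^{(n)} = ∫_B λ(y) dy, and for a finite configuration φ = {y₁, …, y_m} define the binned score S_bin^{𝒯_n}(φ) = Σ_{B ∈ 𝒯_n} [ −φ(B) log λ_B^{(n)} + λ_B^{(n)}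 ] and the correction C_n(φ) = Σ_{B ∈ 𝒯_n} 1{φ(B) > 0} · log|B|, where |B| is the Lebesgue measure of B. Then for every m ∈ ℕ₀ and Lebesgue-almost every tuple (y₁, …, y_m) ∈ X^m of distinct points, S_bin^{𝒯_n}(φ) + C_n(φ) → −Σ_{j=1}^m log λ(y_j) + ∫_X λ(y) dy as n → ∞. That is, for almost every realization of a unit-rate Poisson point process, the binned Poisson score with correction converges to the logarithmic intensity score S(Λ, φ) = −Σ_j log λ(y_j) + ∫_X λ. -/
/-!
Once `n` is so large that the points `y₁, …, y_m` lie in distinct bins, the correction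
turns the term of an occupied bin `B` into `log |B| - log ∫_B λ = -log (⨍_B λ)`, so the
corrected binned score equals `∫_X λ - Σ_j log (⨍_{B_n(y_j)} λ)`. With respect to Lebesgue
measure on `X`, the bin averages `⨍_{B_n(·)} λ` are the conditional expectations of `λ`
given `σ(𝒯_n)`, so by Lévy's upward martingale convergence theorem they converge to `λ`
almost everywhere; for almost every tuple this happens at every `y_j`.
-/

open Set MeasureTheory Filter
open scoped Classical Topology

section Bins

variable {α : Type*}

theorem sum_ite_mem_eq_of_mem {β : Type*} [AddCommMonoid β] {P : Finset (Set α)}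
    (hP : (P : Set (Set α)).PairwiseDisjoint id) {B₀ : Set α} (hB₀ : B₀ ∈ P) {x : α}
    (hx : x ∈ B₀) (F : Set α → β) :
    ∑ B ∈ P, (if x ∈ B then F B else 0) = F B₀ := by
  refine (Finset.sum_eq_single_of_mem B₀ hB₀ fun B hB hne => ?_).trans (if_pos hx)
  exact if_neg fun hxB => disjoint_left.mp (hP hB hB₀ hne) hxB hx

theorem Set.PairwiseDisjoint.isPiSystem {S : Set (Set α)} (h : S.PairwiseDisjoint id) :
    IsPiSystem S := by
  rintro u hu v hv huv
  obtain rfl : u = v := h.elim hu hv (not_disjoint_iff_nonempty_inter.mpr huv)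
  simpa using hu

theorem generateFrom_le_generateFrom_of_refines {P Q : Finset (Set α)}
    (hP : (P : Set (Set α)).PairwiseDisjoint id) (hcover : ⋃₀ (P : Set (Set α)) ⊆ ⋃₀ ↑Q)
    (hrefines : ∀ B ∈ Q, ∃ B' ∈ P, B ⊆ B') :
    MeasurableSpace.generateFrom (P : Set (Set α)) ≤ MeasurableSpace.generateFrom ↑Q := by
  refine MeasurableSpace.generateFrom_le fun B hB => ?_
  have hB_eq : B = ⋃ B' ∈ Q.filter (· ⊆ B), B' := by
    refine Subset.antisymm (fun x hx => ?_)
      (iUnion₂_subset fun B' hB' => (Finset.mem_filter.mp hB').2)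
    obtain ⟨B', hB', hxB'⟩ := hcover (subset_sUnion_of_mem hB hx)
    obtain ⟨B'', hB'', hB'B''⟩ := hrefines B' hB'
    obtain rfl : B'' = B := hP.elim hB'' hB (not_disjoint_iff.mpr ⟨x, hB'B'' hxB', hx⟩)
    exact mem_biUnion (Finset.mem_filter.mpr ⟨hB', hB'B''⟩) hxB'
  rw [hB_eq]
  exact MeasurableSet.biUnion (Finset.countable_toSet _) fun B' hB' =>
    MeasurableSpace.measurableSet_generateFrom (Finset.mem_filter.mp hB').1

theorem neg_count_mul_add_ite_exists_eq_sum {ι : Type*} [Fintype ι] {y : ι → α} {B : Set α}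
    [Decidable (∃ j, y j ∈ B)] (hB : ∀ j k, y j ∈ B → y k ∈ B → j = k) (l v : ℝ) :
    -(∑ j, if y j ∈ B then (1 : ℝ) else 0) * l + (if ∃ j, y j ∈ B then v else 0) =
      ∑ j, if y j ∈ B then v - l else 0 := by
  by_cases hocc : ∃ j, y j ∈ B
  · obtain ⟨j₀, hj₀⟩ := hocc
    have hother : ∀ k ≠ j₀, y k ∉ B := fun k hk hkB => hk (hB k j₀ hkB hj₀)
    rw [Fintype.sum_eq_single j₀ fun k hk => if_neg (hother k hk),
      Fintype.sum_eq_single j₀ fun k hk => if_neg (hother k hk)]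
    simp only [if_pos hj₀, if_pos (⟨j₀, hj₀⟩ : ∃ j, y j ∈ B)]
    ring
  · simp only [not_exists] at hocc
    simp [hocc]

theorem sum_score_add_sum_correction_eq_of_separated {ι : Type*} [Fintype ι] {y : ι → α}
    {P : Finset (Set α)} [∀ B : Set α, Decidable (∃ j, y j ∈ B)]
    (hsep : ∀ B ∈ P, ∀ j k, y j ∈ B → y k ∈ B → j = k) (L I V : Set α → ℝ) :
    (∑ B ∈ P, (-(∑ j, if y j ∈ B then (1 : ℝ) else 0) * L B + I B)) +
        ∑ B ∈ P, (if ∃ j, y j ∈ B then V B else 0) =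
      ∑ j, ∑ B ∈ P, (if y j ∈ B then V B - L B else 0) + ∑ B ∈ P, I B := by
  rw [Finset.sum_comm, ← Finset.sum_add_distrib, ← Finset.sum_add_distrib]
  refine Finset.sum_congr rfl fun B hB => ?_
  rw [← neg_count_mul_add_ite_exists_eq_sum (hsep B hB)]
  ring

end Bins

section BinAverage

variable {α : Type*} {m0 : MeasurableSpace α} {μ : Measure α}

theorem Measurable.indicator_of_measurableSet_subset {m : MeasurableSpace α} {β : Type*}
    [Zero β] [MeasurableSpace β] {X : Set α} {f : α → β} (hX : MeasurableSet[m0] X)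
    (hf : Measurable[m0] f) (hsub : ∀ A ⊆ X, MeasurableSet[m0] A → MeasurableSet[m] A) :
    Measurable[m] (X.indicator f) := fun s hs => by
  rw [indicator_preimage]
  exact (hsub _ inter_subset_right ((hf hs).inter hX)).union
    ((measurable_const hs).diff (hsub X subset_rfl hX))

theorem setIntegral_sUnion_finset {E : Type*} [NormedAddCommGroup E] [NormedSpace ℝ E]
    {P : Finset (Set α)} (hmeas : ∀ B ∈ P, MeasurableSet B)
    (hdisj : (P : Set (Set α)).PairwiseDisjoint id) {f : α → E}
    (hf : IntegrableOn f (⋃₀ ↑P) μ) :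
    ∫ x in ⋃₀ ↑P, f x ∂μ = ∑ B ∈ P, ∫ x in B, f x ∂μ := by
  rw [sUnion_eq_biUnion, Finset.set_biUnion_coe]
  rw [sUnion_eq_biUnion, Finset.set_biUnion_coe] at hf
  exact integral_biUnion_finset P hmeas hdisj fun B hB =>
    hf.mono_set (subset_biUnion_of_mem (u := id) hB)

theorem setIntegral_eq_of_isPiSystem {E : Type*} [NormedAddCommGroup E] [NormedSpace ℝ E]
    {S : Set (Set α)} (hS : ∀ t ∈ S, MeasurableSet t) (h_inter : IsPiSystem S) {f g : α → E}
    (hf : Integrable f μ) (hg : Integrable g μ)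
    (basic : ∀ t ∈ S, ∫ x in t, f x ∂μ = ∫ x in t, g x ∂μ)
    (h_univ : ∫ x, f x ∂μ = ∫ x, g x ∂μ) :
    ∀ t, MeasurableSet[MeasurableSpace.generateFrom S] t →
      ∫ x in t, f x ∂μ = ∫ x in t, g x ∂μ := by
  have hle : MeasurableSpace.generateFrom S ≤ m0 := MeasurableSpace.generateFrom_le hS
  refine MeasurableSpace.induction_on_inter rfl h_inter (by simp) basic ?_ ?_
  · intro t ht h_eq
    rw [setIntegral_compl (hle t ht) hf, setIntegral_compl (hle t ht) hg, h_eq, h_univ]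
  · intro t htd htm h_eq
    rw [integral_iUnion (fun i => hle _ (htm i)) htd hf.integrableOn,
      integral_iUnion (fun i => hle _ (htm i)) htd hg.integrableOn]
    exact tsum_congr h_eq

variable (μ) in
/-- `0` outside `⋃₀ P`, and also on null bins since `x / 0 = 0`. -/
noncomputable def binAverage (P : Finset (Set α)) (f : α → ℝ) (x : α) : ℝ :=
  ∑ B ∈ P, B.indicator (fun _ => (∫ z in B, f z ∂μ) / μ.real B) x

variable {P : Finset (Set α)} {f : α → ℝ}

theorem binAverage_eq_of_mem (hP : (P : Set (Set α)).PairwiseDisjoint id) {B₀ : Set α}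
    (hB₀ : B₀ ∈ P) {x : α} (hx : x ∈ B₀) :
    binAverage μ P f x = (∫ z in B₀, f z ∂μ) / μ.real B₀ := by
  simp only [binAverage, indicator_apply]
  exact sum_ite_mem_eq_of_mem hP hB₀ hx _

theorem stronglyMeasurable_binAverage :
    StronglyMeasurable[MeasurableSpace.generateFrom ↑P] (binAverage μ P f) :=
  Finset.stronglyMeasurable_fun_sum _ fun _ hB =>
    stronglyMeasurable_const.indicator (MeasurableSpace.measurableSet_generateFrom hB)

theorem integrable_binAverage [IsFiniteMeasure μ] (hmeas : ∀ B ∈ P, MeasurableSet B) :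
    Integrable (binAverage μ P f) μ :=
  integrable_finsetSum _ fun B hB =>
    (integrable_indicator_iff (hmeas B hB)).mpr (integrableOn_const (measure_ne_top μ B))

theorem setIntegral_binAverage [IsFiniteMeasure μ] (hmeas : ∀ B ∈ P, MeasurableSet B)
    (hdisj : (P : Set (Set α)).PairwiseDisjoint id) {B₀ : Set α} (hB₀ : B₀ ∈ P) :
    ∫ x in B₀, binAverage μ P f x ∂μ = ∫ x in B₀, f x ∂μ := by
  rw [setIntegral_congr_fun (hmeas B₀ hB₀) fun x hx => binAverage_eq_of_mem hdisj hB₀ hx,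
    setIntegral_const, smul_eq_mul]
  by_cases hnull : μ.real B₀ = 0
  · rw [setIntegral_measure_zero _ ((measureReal_eq_zero_iff).mp hnull), hnull, zero_mul]
  · exact mul_div_cancel₀ _ hnull

theorem binAverage_ae_eq_condExp [IsFiniteMeasure μ] (hmeas : ∀ B ∈ P, MeasurableSet B)
    (hdisj : (P : Set (Set α)).PairwiseDisjoint id) (hcover : μ (⋃₀ ↑P)ᶜ = 0)
    (hf : Integrable f μ) :
    binAverage μ P f =ᵐ[μ] μ[f | MeasurableSpace.generateFrom ↑P] := by
  have hfull : ∀ g : α → ℝ, ∫ x in ⋃₀ ↑P, g x ∂μ = ∫ x, g x ∂μ := fun g => by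
    have hae : ∀ᵐ x ∂μ, x ∈ ⋃₀ (P : Set (Set α)) := mem_ae_iff.mpr hcover
    rw [Measure.restrict_eq_self_of_ae_mem hae]
  have hint := integrable_binAverage (μ := μ) (f := f) hmeas
  have h_univ : ∫ x, binAverage μ P f x ∂μ = ∫ x, f x ∂μ := by
    rw [← hfull, ← hfull, setIntegral_sUnion_finset hmeas hdisj hint.integrableOn,
      setIntegral_sUnion_finset hmeas hdisj hf.integrableOn]
    exact Finset.sum_congr rfl fun B hB => setIntegral_binAverage hmeas hdisj hB
  exact ae_eq_condExp_of_forall_setIntegral_eq (MeasurableSpace.generateFrom_le hmeas) hf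
    (fun _ _ _ => hint.integrableOn)
    (fun t ht _ => setIntegral_eq_of_isPiSystem hmeas hdisj.isPiSystem hint hf
      (fun B hB => setIntegral_binAverage hmeas hdisj hB) h_univ t ht)
    stronglyMeasurable_binAverage.aestronglyMeasurable

theorem ae_tendsto_binAverage [IsFiniteMeasure μ] {P : ℕ → Finset (Set α)}
    (hmeas : ∀ n, ∀ B ∈ P n, MeasurableSet B)
    (hdisj : ∀ n, (P n : Set (Set α)).PairwiseDisjoint id) (hcover : ∀ n, μ (⋃₀ ↑(P n))ᶜ = 0)
    (hmono : Monotone fun n => MeasurableSpace.generateFrom (P n : Set (Set α)))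
    (hf : Integrable f μ)
    (hf_meas : StronglyMeasurable[⨆ n, MeasurableSpace.generateFrom ↑(P n)] f) :
    ∀ᵐ x ∂μ, Tendsto (fun n => binAverage μ (P n) f x) atTop (𝓝 (f x)) := by
  let ℱ : Filtration ℕ m0 :=
    ⟨fun n => MeasurableSpace.generateFrom ↑(P n), hmono,
      fun n => MeasurableSpace.generateFrom_le (hmeas n)⟩
  filter_upwards [hf.tendsto_ae_condExp (ℱ := ℱ) hf_meas,
    ae_all_iff.mpr fun n => binAverage_ae_eq_condExp (hmeas n) (hdisj n) (hcover n) hf]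
    with x hx hx_eq
  simpa only [hx_eq] using hx

section Dissecting

variable {X : Set α} {P : ℕ → Finset (Set α)} (hX : MeasurableSet X) (hμX : μ X ≠ ⊤)
  (hcover : ∀ n, ⋃₀ ↑(P n) = X) (hmeas : ∀ n, ∀ B ∈ P n, MeasurableSet B)
  (hdisj : ∀ n, (P n : Set (Set α)).PairwiseDisjoint id)
  (hnest : ∀ n, ∀ B ∈ P (n + 1), ∃ B' ∈ P n, B ⊆ B')
  (hgen : ∀ A ⊆ X, MeasurableSet A →
    MeasurableSet[⨆ n, MeasurableSpace.generateFrom (P n : Set (Set α))] A)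
  (hf_meas : Measurable f) (hf : IntegrableOn f X μ)
include hX hμX hcover hmeas hdisj hnest hgen hf_meas hf

theorem ae_tendsto_binAverage_of_dissecting :
    ∀ᵐ x ∂μ, x ∈ X → Tendsto (fun n => binAverage μ (P n) f x) atTop (𝓝 (f x)) := by
  have : IsFiniteMeasure (μ.restrict X) := isFiniteMeasure_restrict.mpr hμX
  have hsub : ∀ n, ∀ B ∈ P n, B ⊆ X := fun n B hB => hcover n ▸ subset_sUnion_of_mem hB
  have hrestrict :
      ∀ n, binAverage (μ.restrict X) (P n) (X.indicator f) = binAverage μ (P n) f := by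
    intro n
    funext x
    refine Finset.sum_congr rfl fun B hB => ?_
    have hBX : (μ.restrict X).restrict B = μ.restrict B := by
      rw [Measure.restrict_restrict (hmeas n B hB), inter_eq_left.mpr (hsub n B hB)]
    rw [hBX, measureReal_restrict_apply (hmeas n B hB), inter_eq_left.mpr (hsub n B hB),
      setIntegral_congr_fun (hmeas n B hB) fun z hz => indicator_of_mem (hsub n B hB hz) f]
  have hconv := ae_tendsto_binAverage (μ := μ.restrict X) (f := X.indicator f) hmeas hdisj
    (fun n => by rw [hcover n, Measure.restrict_apply hX.compl, compl_inter_self, measure_empty])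
    (monotone_nat_of_le_succ fun n => generateFrom_le_generateFrom_of_refines (hdisj n)
      (by rw [hcover, hcover]) (hnest n))
    ((integrable_indicator_iff hX).mpr hf).restrict
    (hf_meas.indicator_of_measurableSet_subset hX hgen).stronglyMeasurable
  rw [ae_restrict_iff' hX] at hconv
  filter_upwards [hconv] with x hx hxX
  simpa only [hrestrict, indicator_of_mem hxX] using hx hxX

theorem ae_tendsto_sum_log_measure_sub_log_integral_of_dissecting (hpos : ∀ x ∈ X, 0 < f x) :
    ∀ᵐ x ∂μ, x ∈ X → Tendsto (fun n => ∑ B ∈ P n,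
      if x ∈ B then Real.log (μ B).toReal - Real.log (∫ z in B, f z ∂μ) else 0)
      atTop (𝓝 (-Real.log (f x))) := by
  filter_upwards [ae_tendsto_binAverage_of_dissecting hX hμX hcover hmeas hdisj hnest hgen
    hf_meas hf] with x hconv hxX
  have hx := hconv hxX
  have hev : ∀ᶠ n in atTop, 0 < binAverage μ (P n) f x :=
    hx.eventually (eventually_gt_nhds (hpos x hxX))
  refine ((Real.continuousAt_log (hpos x hxX).ne').tendsto.comp hx).neg.congr' ?_
  filter_upwards [hev] with n hn
  obtain ⟨B₀, hB₀, hxB₀⟩ : x ∈ ⋃₀ ↑(P n) := (hcover n).symm ▸ hxX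
  rw [binAverage_eq_of_mem (hdisj n) hB₀ hxB₀] at hn
  obtain ⟨hint, hvol⟩ := div_ne_zero_iff.mp hn.ne'
  rw [Function.comp_apply, binAverage_eq_of_mem (hdisj n) hB₀ hxB₀,
    sum_ite_mem_eq_of_mem (hdisj n) hB₀ hxB₀, Real.log_div hint hvol, measureReal_def]
  ring

end Dissecting

end BinAverage

/-- **Convergence of the binned Poisson score to the logarithmic intensity
score.** For a dissecting system `(𝒯 n)` of nested finite partitions of a
bounded Borel set `X ⊆ ℝ^d` into rectangles, whose σ-algebras increase to the
Borel σ-algebra of `X` and which asymptotically separates points, the binned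
score `Σ_B [-φ(B) log ∫_B λ + ∫_B λ]` plus the correction
`Σ_B 1{φ(B) > 0} log|B|` converges, for every `m` and almost every tuple of
`m` distinct points of `X`, to `-Σ_j log λ(y_j) + ∫_X λ`. -/
theorem binned_score_tendsto_log_score
    (d : ℕ) (X : Set (Fin d → ℝ))
    (hXbdd : Bornology.IsBounded X) (hXmeas : MeasurableSet X)
    (lam : (Fin d → ℝ) → ℝ) (hlamMeas : Measurable lam)
    (hlamPos : ∀ x ∈ X, 0 < lam x) (hlamInt : IntegrableOn lam X volume)
    (𝒯 : ℕ → Finset (Set (Fin d → ℝ)))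
    -- each `𝒯 n` is a partition of `X` ...
    (hcover : ∀ n, ⋃₀ (↑(𝒯 n) : Set (Set (Fin d → ℝ))) = X)
    (hdisj : ∀ n, ∀ B ∈ 𝒯 n, ∀ B' ∈ 𝒯 n, B ≠ B' → Disjoint B B')
    -- ... into rectangles
    (hrect : ∀ n, ∀ B ∈ 𝒯 n, ∃ a b : Fin d → ℝ,
      B = X ∩ Set.univ.pi fun i => Set.Ico (a i) (b i))
    -- the partitions are nested
    (hnest : ∀ n, ∀ B ∈ 𝒯 (n + 1), ∃ B' ∈ 𝒯 n, B ⊆ B')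
    -- the σ-algebras `σ(𝒯 n)` increase to the Borel σ-algebra of `X`
    (hgen : ∀ A : Set (Fin d → ℝ), A ⊆ X → MeasurableSet A →
      MeasurableSet[⨆ n, MeasurableSpace.generateFrom
        (↑(𝒯 n) : Set (Set (Fin d → ℝ)))] A)
    -- every pair of distinct points of `X` is eventually separated
    (hsep : ∀ x ∈ X, ∀ y ∈ X, x ≠ y → ∃ n₀, ∀ n ≥ n₀, ∀ B ∈ 𝒯 n,
      ¬(x ∈ B ∧ y ∈ B)) :
    ∀ m : ℕ, ∀ᵐ y ∂(Measure.pi fun _ : Fin m => (volume : Measure (Fin d → ℝ))),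
      ((∀ j, y j ∈ X) ∧ Function.Injective y) →
      Tendsto (fun n =>
          (∑ B ∈ 𝒯 n, (-(∑ j : Fin m, if y j ∈ B then (1:ℝ) else 0) *
              Real.log (∫ x in B, lam x) + ∫ x in B, lam x)) +
          ∑ B ∈ 𝒯 n, (if ∃ j : Fin m, y j ∈ B then
              Real.log (volume B).toReal else 0))
        atTop
        (𝓝 (-(∑ j : Fin m, Real.log (lam (y j))) + ∫ x in X, lam x)) := by
  intro m
  have hmeas : ∀ n, ∀ B ∈ 𝒯 n, MeasurableSet B := fun n B hB => by
    obtain ⟨a, b, rfl⟩ := hrect n B hB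
    exact hXmeas.inter (MeasurableSet.univ_pi fun _ => measurableSet_Ico)
  have hdisj' : ∀ n, (𝒯 n : Set (Set (Fin d → ℝ))).PairwiseDisjoint id :=
    fun n B hB B' hB' hne => hdisj n B hB B' hB' hne
  have hpoint := ae_tendsto_sum_log_measure_sub_log_integral_of_dissecting hXmeas
    hXbdd.measure_lt_top.ne hcover hmeas hdisj' hnest hgen hlamMeas hlamInt hlamPos
  filter_upwards [ae_all_iff.mpr fun j => (Measure.quasiMeasurePreserving_eval _ j).ae hpoint]
    with y hy ⟨hyX, hyinj⟩
  have hseparated : ∀ᶠ n in atTop, ∀ B ∈ 𝒯 n, ∀ j k, y j ∈ B → y k ∈ B → j = k := by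
    suffices ∀ j k, ∀ᶠ n in atTop, ∀ B ∈ 𝒯 n, y j ∈ B → y k ∈ B → j = k by
      filter_upwards [eventually_all.mpr fun j => eventually_all.mpr (this j)]
        with n hn B hB j k using hn j k B hB
    intro j k
    by_cases hjk : j = k
    · exact Eventually.of_forall fun _ _ _ _ _ => hjk
    obtain ⟨n₀, hn₀⟩ := hsep _ (hyX j) _ (hyX k) (hyinj.ne hjk)
    exact eventually_atTop.mpr ⟨n₀, fun n hn B hB hj hk => (hn₀ n hn B hB ⟨hj, hk⟩).elim⟩
  have hmass : ∀ n, ∑ B ∈ 𝒯 n, ∫ x in B, lam x = ∫ x in X, lam x := fun n => by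
    rw [← hcover n, setIntegral_sUnion_finset (hmeas n) (hdisj' n) (hcover n ▸ hlamInt)]
  rw [← Finset.sum_neg_distrib]
  refine ((tendsto_finsetSum _ fun j _ => hy j (hyX j)).add tendsto_const_nhds).congr' ?_
  filter_upwards [hseparated] with n hn
  rw [← hmass n]
  exact (sum_score_add_sum_correction_eq_of_separated hn _ _ _).symm
end

section
/- (Joint elicitability of mean and variance.) Let f : ℝ² → ℝ be a strictly convex function with subgradient selection ∇f, and let b((a, c), (u, v)) = −f(a, c) − ⟨∇f(a, c), (u − a, v − c)⟩ denote the associated strictly consistent Bregman function on ℝ². Define a scoring function on ℝ × [0, ∞) by S((m, σ²), y) = b((m, σ² + m²), (y, y²)). Then for every real random variable Y with E[Y²] < ∞, mean μ = E[Y] and variance v = Var(Y): E[S((m, σ²), Y)] ≥ E[S((μ, v), Y)] for all (m, σ²) ∈ ℝ × [0, ∞), with equality if and only if (m, σ²) = (μ, v). Hence, although the variance alone is not elicitable, the pair (mean, variance) is elicitable, with strictly consistent scoring functions obtained from Bregman functions for (E Y, E Y²) via the revelation principle applied to the bijection (m, s) ↦ (m, s − m²). -/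
/-!
The point `(m, σ²)` is reported through the injective map `(m, σ²) ↦ (m, σ² + m²)`, and `S` is
the Bregman score of this image against `(Y, Y²)`. The Bregman score is affine in its second
argument, so its expectation at `a` is its value at `(E Y, E Y²)`; by the subgradient inequality
that value is at least `-f (E Y, E Y²)`, with equality only at `a = (E Y, E Y²)` by strict
convexity. Finally `(E Y, Var Y)` is the preimage of `(E Y, E Y²)`.
-/

open MeasureTheory

def bregmanScore {E : Type*} [AddCommGroup E] [Module ℝ E] [TopologicalSpace E]
    (f : E → ℝ) (g : E → E →L[ℝ] ℝ) (a z : E) : ℝ :=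
  -f a - g a (z - a)

section Convexity

variable {E : Type*} [AddCommGroup E] [Module ℝ E] [TopologicalSpace E]
  {f : E → ℝ} {g : E → E →L[ℝ] ℝ}

@[simp]
lemma bregmanScore_self (a : E) : bregmanScore f g a a = -f a := by
  simp [bregmanScore]

lemma bregmanScore_self_le (hg : ∀ a z, f a + g a (z - a) ≤ f z) (a z : E) :
    bregmanScore f g z z ≤ bregmanScore f g a z := by
  rw [bregmanScore_self, bregmanScore]
  linarith [hg a z]

/-- Equality means `f z` equals the tangent value `f a + g a (z - a)`; if `a ≠ z`, strict
convexity puts `f` strictly below that tangent at the midpoint of `[a, z]`, against the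
subgradient inequality. -/
lemma eq_of_bregmanScore_eq_self (hf : StrictConvexOn ℝ Set.univ f)
    (hg : ∀ a z, f a + g a (z - a) ≤ f z) {a z : E}
    (h : bregmanScore f g a z = bregmanScore f g z z) : a = z := by
  by_contra hne
  have hfz : f z = f a + g a (z - a) := by
    rw [bregmanScore_self, bregmanScore] at h
    linarith
  have hmid := hf.2 (Set.mem_univ a) (Set.mem_univ z) hne one_half_pos one_half_pos
    (add_halves 1)
  have hsub := hg a ((1 / 2 : ℝ) • a + (1 / 2 : ℝ) • z)
  have hmid_sub : (1 / 2 : ℝ) • a + (1 / 2 : ℝ) • z - a = (1 / 2 : ℝ) • (z - a) := by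
    module
  rw [hmid_sub, map_smul, smul_eq_mul] at hsub
  rw [smul_eq_mul, smul_eq_mul] at hmid
  linarith

end Convexity

section Integral

variable {E : Type*} [NormedAddCommGroup E] [NormedSpace ℝ E] [CompleteSpace E]
  {Ω : Type*} [MeasurableSpace Ω] {μ : Measure Ω} [IsProbabilityMeasure μ]
  {f : E → ℝ} {g : E → E →L[ℝ] ℝ} {Z : Ω → E}

lemma integral_bregmanScore (hZ : Integrable Z μ) (a : E) :
    ∫ ω, bregmanScore f g a (Z ω) ∂μ = bregmanScore f g a (∫ ω, Z ω ∂μ) := by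
  have hZa : Integrable (fun ω => Z ω - a) μ := hZ.sub (integrable_const a)
  simp only [bregmanScore]
  rw [integral_sub (integrable_const _) ((g a).integrable_comp hZa), integral_const,
    (g a).integral_comp_comm hZa, integral_sub hZ (integrable_const a), integral_const]
  simp

lemma integral_bregmanScore_mean_le (hg : ∀ a z, f a + g a (z - a) ≤ f z)
    (hZ : Integrable Z μ) (a : E) :
    ∫ ω, bregmanScore f g (∫ ω, Z ω ∂μ) (Z ω) ∂μ ≤ ∫ ω, bregmanScore f g a (Z ω) ∂μ := by
  rw [integral_bregmanScore hZ, integral_bregmanScore hZ]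
  exact bregmanScore_self_le hg a _

lemma integral_bregmanScore_eq_mean_iff (hf : StrictConvexOn ℝ Set.univ f)
    (hg : ∀ a z, f a + g a (z - a) ≤ f z) (hZ : Integrable Z μ) (a : E) :
    ∫ ω, bregmanScore f g a (Z ω) ∂μ = ∫ ω, bregmanScore f g (∫ ω, Z ω ∂μ) (Z ω) ∂μ ↔
      a = ∫ ω, Z ω ∂μ := by
  rw [integral_bregmanScore hZ, integral_bregmanScore hZ]
  exact ⟨eq_of_bregmanScore_eq_self hf hg, fun h => h ▸ rfl⟩

end Integral

def pairingCLM (p : ℝ × ℝ) : ℝ × ℝ →L[ℝ] ℝ :=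
  p.1 • ContinuousLinearMap.fst ℝ ℝ ℝ + p.2 • ContinuousLinearMap.snd ℝ ℝ ℝ

@[simp]
lemma pairingCLM_apply (p x : ℝ × ℝ) : pairingCLM p x = p.1 * x.1 + p.2 * x.2 := rfl

/-- **Joint elicitability of mean and variance.** For a strictly convex
`f : ℝ² → ℝ` with subgradient selection `∇f` and associated Bregman function
`b`, the scoring function `S((m, σ²), y) = b((m, σ² + m²), (y, y²))` is
strictly consistent for the pair (mean, variance): its expected score is
uniquely minimized over `ℝ × [0, ∞)` at `(E Y, Var Y)`. -/
theorem mean_variance_jointly_elicitable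
    (f : ℝ × ℝ → ℝ) (gradf : ℝ × ℝ → ℝ × ℝ)
    (hconv : StrictConvexOn ℝ Set.univ f)
    (hsubgrad : ∀ a z : ℝ × ℝ,
      f a + (gradf a).1 * (z.1 - a.1) + (gradf a).2 * (z.2 - a.2) ≤ f z)
    (b : ℝ × ℝ → ℝ × ℝ → ℝ)
    (hb : ∀ a z, b a z =
      -f a - ((gradf a).1 * (z.1 - a.1) + (gradf a).2 * (z.2 - a.2)))
    (S : ℝ × ℝ → ℝ → ℝ)
    (hS : ∀ (p : ℝ × ℝ) (y : ℝ), S p y = b (p.1, p.2 + p.1 ^ 2) (y, y ^ 2))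
    {Ω : Type*} [MeasurableSpace Ω] (μ : Measure Ω) [IsProbabilityMeasure μ]
    (Y : Ω → ℝ) (hYmeas : Measurable Y)
    (hY2int : Integrable (fun ω => (Y ω) ^ 2) μ)
    (m₀ v : ℝ) (hm₀ : m₀ = ∫ ω, Y ω ∂μ)
    (hv : v = (∫ ω, (Y ω) ^ 2 ∂μ) - m₀ ^ 2) :
    ∀ (m σ2 : ℝ), 0 ≤ σ2 →
      (∫ ω, S (m₀, v) (Y ω) ∂μ ≤ ∫ ω, S (m, σ2) (Y ω) ∂μ) ∧
      (∫ ω, S (m, σ2) (Y ω) ∂μ = ∫ ω, S (m₀, v) (Y ω) ∂μ ↔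
        (m, σ2) = (m₀, v)) := by
  intro m σ2 _
  set g : ℝ × ℝ → ℝ × ℝ →L[ℝ] ℝ := fun a => pairingCLM (gradf a)
  have hg : ∀ a z, f a + g a (z - a) ≤ f z := fun a z => by
    simpa [g, add_assoc] using hsubgrad a z
  have hSb : ∀ p y, S p y = bregmanScore f g (p.1, p.2 + p.1 ^ 2) (y, y ^ 2) := fun p y => by
    rw [hS, hb]; rfl
  have hYint : Integrable Y μ :=
    ((memLp_two_iff_integrable_sq hYmeas.aestronglyMeasurable).2 hY2int).integrable one_le_two
  have hZ : Integrable (fun ω => (Y ω, Y ω ^ 2)) μ := hYint.prodMk hY2int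
  have hmean : ∫ ω, (Y ω, Y ω ^ 2) ∂μ = (m₀, v + m₀ ^ 2) := by
    rw [integral_pair hYint hY2int, hv, hm₀, sub_add_cancel]
  simp only [hSb, ← hmean]
  refine ⟨integral_bregmanScore_mean_le hg hZ _, ?_⟩
  rw [integral_bregmanScore_eq_mean_iff hconv hg hZ, hmean, Prod.mk.injEq, Prod.mk.injEq]
  exact and_congr_right fun hm => by rw [hm, add_left_inj]
end

section
/- (Strict consistency of the bin score of earthquake likelihood model testing.) Let Φ : Ω → Measure(X) be a point process on a measurable space X and let B₁, …, B_N be disjoint measurable bins. Put m_i = E[Φ(B_i)] and assume m_i ∈ (0, ∞) for all i. For reports λ = (λ₁, …, λ_N) ∈ (0, ∞)^N define the bin scoring function S_bin(λ, φ) = Σ_{i=1}^N [ −φ(B_i) log λ_i + λ_i ]. Then E[S_bin(λ, Φ)] ≥ E[S_bin(m, Φ)] for all λ ∈ (0, ∞)^N, with equality if and only if λ = m. Hence S_bin, which equals the negative 'Poisson log-likelihood' of the RELM testing framework up to a report-independent term, is a strictly consistent scoring function for the collection of bin expectations (E[Φ(B₁)], …, E[Φ(B_N)]), regardless of whether the data-generating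 process is a Poisson point process. -/
open MeasureTheory

lemma key_ineq {a b : ℝ} (ha : 0 < a) (hb : 0 < b) :
    -a * Real.log a + a ≤ -a * Real.log b + b := by
  have h := Real.log_le_sub_one_of_pos (div_pos hb ha)
  rw [Real.log_div hb.ne' ha.ne'] at h
  have he : a * (b / a - 1) = b - a := by field_simp
  nlinarith [mul_le_mul_of_nonneg_left h ha.le, he]

lemma key_ineq_strict {a b : ℝ} (ha : 0 < a) (hb : 0 < b) (hne : b ≠ a) :
    -a * Real.log a + a < -a * Real.log b + b := by
  have h1 : b / a ≠ 1 := by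
    intro h; exact hne (by field_simp at h; linarith)
  have h := Real.log_lt_sub_one_of_pos (div_pos hb ha) h1
  rw [Real.log_div hb.ne' ha.ne'] at h
  have he : a * (b / a - 1) = b - a := by field_simp
  nlinarith [mul_lt_mul_of_pos_left h ha, he]

/-- **Strict consistency of the bin score of earthquake likelihood model
testing.** For a point process `Φ` and disjoint measurable bins `B₁, …, B_N`
with bin expectations `mᵢ = E[Φ(Bᵢ)] ∈ (0, ∞)`, the bin score
`S_bin(λ, φ) = Σᵢ [-φ(Bᵢ) log λᵢ + λᵢ]` is strictly consistent for the vector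
of bin expectations, regardless of whether `Φ` is a Poisson point process. -/
theorem bin_score_strictly_consistent
    {Ω X : Type*} [MeasurableSpace Ω] [MeasurableSpace X]
    (μ : Measure Ω) [IsProbabilityMeasure μ]
    (Φ : Ω → Measure X)
    (hΦmeas : ∀ B : Set X, MeasurableSet B → Measurable fun ω => Φ ω B)
    (N : ℕ) (B : Fin N → Set X) (hBmeas : ∀ i, MeasurableSet (B i))
    (hBdisj : ∀ i j, i ≠ j → Disjoint (B i) (B j))
    (m : Fin N → ℝ)
    (hmfin : ∀ i, ∫⁻ ω, Φ ω (B i) ∂μ < ⊤)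
    (hm : ∀ i, m i = ∫ ω, (Φ ω (B i)).toReal ∂μ)
    (hmpos : ∀ i, 0 < m i)
    (Sbin : (Fin N → ℝ) → Measure X → ℝ)
    (hSbin : ∀ (l : Fin N → ℝ) (φ : Measure X), Sbin l φ =
      ∑ i : Fin N, (-(φ (B i)).toReal * Real.log (l i) + l i)) :
    ∀ l : Fin N → ℝ, (∀ i, 0 < l i) →
      (∫ ω, Sbin m (Φ ω) ∂μ ≤ ∫ ω, Sbin l (Φ ω) ∂μ) ∧
      (∫ ω, Sbin l (Φ ω) ∂μ = ∫ ω, Sbin m (Φ ω) ∂μ ↔ l = m) := by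
  have hint : ∀ i : Fin N, Integrable (fun ω => (Φ ω (B i)).toReal) μ := fun i =>
    integrable_toReal_of_lintegral_ne_top (hΦmeas (B i) (hBmeas i)).aemeasurable
      (hmfin i).ne
  have hIcalc : ∀ l : Fin N → ℝ,
      ∫ ω, Sbin l (Φ ω) ∂μ = ∑ i : Fin N, (-(m i) * Real.log (l i) + l i) := by
    intro l
    have : ∫ ω, Sbin l (Φ ω) ∂μ
        = ∫ ω, ∑ i : Fin N, (-(Φ ω (B i)).toReal * Real.log (l i) + l i) ∂μ := by
      simp_rw [hSbin]
    rw [this, integral_finset_sum]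
    · refine Finset.sum_congr rfl fun i _ => ?_
      have : (fun ω => -(Φ ω (B i)).toReal * Real.log (l i) + l i)
          = fun ω => (-(Real.log (l i))) * (Φ ω (B i)).toReal + l i := by
        funext ω; ring
      rw [this, integral_add ((hint i).const_mul _) (integrable_const _),
        integral_const_mul, integral_const]
      simp [hm i]
      ring
    · intro i _
      exact (((hint i).neg.mul_const _)).add (integrable_const _)
  intro l hl
  rw [hIcalc l, hIcalc m]
  constructor
  · exact Finset.sum_le_sum fun i _ => key_ineq (hmpos i) (hl i)
  · constructor
    · intro h
      by_contra hne
      obtain ⟨i, hi⟩ := Function.ne_iff.mp hne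
      have := Finset.sum_lt_sum (fun j _ => key_ineq (hmpos j) (hl j))
        ⟨i, Finset.mem_univ i, key_ineq_strict (hmpos i) (hl i) hi⟩
      linarith
    · rintro rfl; rfl
end
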